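/- arXiv:1911.12172 — 6 statements merged into one kernel-verified Lean document; each statement's English description precedes it below -/
import Mathlib

section
/- Let {P_A : A ∈ 𝓑} and {S_{α,B} : α ∈ 𝓛, B ∈ 𝓘_α} be elements of a C*-algebra. Conditions (i)-(iii): (i) P_∅=0, P_{A∩A'}=P_A P_{A'}, P_{A∪A'}=P_A+P_{A'}-P_{A∩A'}; (ii) P_A S_{α,B} = S_{α,B} P_{θ_α(A)}; (iii) S_{α,B}^* S_{α',B'} = δ_{α,α'} P_{B∩B'}; are satisfied if and only if conditions (a)-(d): (a) same as (i); (b) P_A S_{α,B} = S_{α, θ_α(A)∩B}; (c) S_{α,B} P_A = S_{α, B∩A}; (d) same as (iii); are satisfied. -/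
open scoped BigOperators

/-- An ideal of a (generalized) Boolean algebra: a nonempty subset closed under
binary unions and under intersection with arbitrary elements. -/
def BoolIdeal {B : Type*} [GeneralizedBooleanAlgebra B] (I : Set B) : Prop :=
  I.Nonempty ∧ (∀ a ∈ I, ∀ b ∈ I, a ⊔ b ∈ I) ∧ (∀ a ∈ I, ∀ b : B, a ⊓ b ∈ I)

/-- An action on a generalized Boolean algebra: a Boolean homomorphism
(preserving ∩, ∪, \) which sends ∅ to ∅. -/
def IsBoolAction {B : Type*} [GeneralizedBooleanAlgebra B] (f : B → B) : Prop :=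
  (∀ a b, f (a ⊓ b) = f a ⊓ f b) ∧ (∀ a b, f (a ⊔ b) = f a ⊔ f b) ∧
    (∀ a b, f (a \ b) = f a \ f b) ∧ f ⊥ = ⊥

/-- For families {P_A} and {S_{α,B} : B ∈ 𝓘_α} in a C*-algebra,
conditions (i)–(iii) hold if and only if conditions (a)–(d) hold. -/
theorem representation_conditions_equiv {B L X : Type*} [GeneralizedBooleanAlgebra B]
    [DecidableEq L] [NonUnitalCStarAlgebra X]
    (θ : L → B → B) (hθ : ∀ α, IsBoolAction (θ α))
    (I : L → Set B) (hI : ∀ α, BoolIdeal (I α)) (hRI : ∀ (α : L) (A : B), θ α A ∈ I α)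
    (P : B → X) (S : L → B → X) :
    -- (i) ∧ (ii) ∧ (iii)
    ((P ⊥ = 0 ∧ (∀ A A', P (A ⊓ A') = P A * P A') ∧
        (∀ A A', P (A ⊔ A') = P A + P A' - P (A ⊓ A'))) ∧
      (∀ (A : B) (α : L), ∀ C ∈ I α, P A * S α C = S α C * P (θ α A)) ∧
      (∀ (α α' : L), ∀ C ∈ I α, ∀ C' ∈ I α',
        star (S α C) * S α' C' = if α = α' then P (C ⊓ C') else 0))
    ↔
    -- (a) ∧ (b) ∧ (c) ∧ (d)
    ((P ⊥ = 0 ∧ (∀ A A', P (A ⊓ A') = P A * P A') ∧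
        (∀ A A', P (A ⊔ A') = P A + P A' - P (A ⊓ A'))) ∧
      (∀ (A : B) (α : L), ∀ C ∈ I α, P A * S α C = S α (θ α A ⊓ C)) ∧
      (∀ (A : B) (α : L), ∀ C ∈ I α, S α C * P A = S α (C ⊓ A)) ∧
      (∀ (α α' : L), ∀ C ∈ I α, ∀ C' ∈ I α',
        star (S α C) * S α' C' = if α = α' then P (C ⊓ C') else 0)) := by
  constructor
  · rintro ⟨h1, h2, h3⟩
    obtain ⟨hP0, hPmul, hPadd⟩ := h1
    have hSS : ∀ (α : L), ∀ C1 ∈ I α, ∀ C2 ∈ I α,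
        star (S α C1) * S α C2 = P (C1 ⊓ C2) := by
      intro α C1 hC1 C2 hC2
      simpa using h3 α α C1 hC1 C2 hC2
    have hPsa : ∀ (α : L), ∀ D ∈ I α, star (P D) = P D := by
      intro α D hD
      have h := hSS α D hD D hD
      rw [inf_idem] at h
      rw [← h, star_mul, star_star, h]
    refine ⟨⟨hP0, hPmul, hPadd⟩, ?_, ?_, h3⟩
    · -- (b)
      intro A α C hC
      have hθA : θ α A ∈ I α := hRI α A
      have hD : θ α A ⊓ C ∈ I α := (hI α).2.2 _ hθA C
      have h2' := h2 A α C hC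
      set D := θ α A ⊓ C with hDdef
      have key : star (P A * S α C - S α D) * (P A * S α C - S α D) = 0 := by
        have e0 : star (P A * S α C) = P (θ α A) * star (S α C) := by
          rw [h2', star_mul, hPsa α _ hθA]
        have ea : star (P A * S α C) * (P A * S α C) = P D := by
          rw [e0, h2', mul_assoc, ← mul_assoc (star (S α C)), hSS α C hC C hC,
            inf_idem, ← hPmul, ← hPmul, hDdef]
          congr 1
          simp [inf_comm, inf_assoc, inf_left_comm]
        have eb : star (P A * S α C) * S α D = P D := by
          rw [e0, mul_assoc, hSS α C hC D hD, ← hPmul, hDdef]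
          congr 1
          simp [inf_comm, inf_assoc, inf_left_comm]
        have ec : star (S α D) * (P A * S α C) = P D := by
          rw [h2', ← mul_assoc, hSS α D hD C hC, ← hPmul, hDdef]
          congr 1
          simp [inf_comm, inf_assoc, inf_left_comm]
        have ed : star (S α D) * S α D = P D := by
          rw [hSS α D hD D hD, inf_idem]
        rw [star_sub, sub_mul, mul_sub, mul_sub, ea, eb, ec, ed]
        abel
      have := (CStarRing.star_mul_self_eq_zero_iff _).mp key
      exact sub_eq_zero.mp this
    · -- (c)
      intro A α C hC
      have hD : C ⊓ A ∈ I α := (hI α).2.2 _ hC A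
      set D := C ⊓ A with hDdef
      have key : star (S α C * P A - S α D) * (S α C * P A - S α D) = 0 := by
        have ea : star (S α C * P A) * (S α C * P A) = star (P A) * P D := by
          rw [star_mul, mul_assoc, ← mul_assoc (star (S α C)), hSS α C hC C hC,
            inf_idem, ← hPmul]
        have eb : star (S α C * P A) * S α D = star (P A) * P D := by
          rw [star_mul, mul_assoc, hSS α C hC D hD, hDdef]
          congr 2
          simp [inf_comm, inf_assoc, inf_left_comm]
        have ec : star (S α D) * (S α C * P A) = P D := by
          rw [← mul_assoc, hSS α D hD C hC, ← hPmul, hDdef]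
          congr 1
          simp [inf_comm, inf_assoc, inf_left_comm]
        have ed : star (S α D) * S α D = P D := by
          rw [hSS α D hD D hD, inf_idem]
        rw [star_sub, sub_mul, mul_sub, mul_sub, ea, eb, ec, ed]
        abel
      have := (CStarRing.star_mul_self_eq_zero_iff _).mp key
      exact sub_eq_zero.mp this
  · rintro ⟨h1, hb, hc, hd⟩
    refine ⟨h1, ?_, hd⟩
    intro A α C hC
    rw [hb A α C hC, hc (θ α A) α C hC, inf_comm C (θ α A)]
end

section
/- Let {P_A, S_{α,B}} be a (𝓑,𝓛,θ,𝓘_α;𝓙)-representation. For words α,β,μ,ν ∈ 𝓛* and A ∈ 𝓘_α, B ∈ 𝓘_β, C ∈ 𝓘_μ, D ∈ 𝓘_ν: (S_{α,A}S_{β,B}^*)(S_{μ,C}S_{ν,D}^*) equals S_{α,A∩B∩C}S_{ν,D∩B∩C}^* if β=μ; equals S_{α,A}S_{νβ',θ_{β'}(C∩D)∩B}^* if β=μβ'; equals S_{αμ',θ_{μ'}(A∩B)∩C}S_{ν,D}^* if μ=βμ'; and equals 0 otherwise. -/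
open scoped BigOperators

/-- Δ_A = {α ∈ 𝓛 : θ_α(A) ≠ ∅}. -/
def Delta {B L : Type*} [GeneralizedBooleanAlgebra B] (θ : L → B → B) (A : B) : Set L :=
  {α | θ α A ≠ ⊥}

/-- A ∈ 𝓑 is regular if every nonempty B ⊆ A satisfies 0 < λ_B < ∞. -/
def BReg {B L : Type*} [GeneralizedBooleanAlgebra B] (θ : L → B → B) : Set B :=
  {A | ∀ b : B, b ≤ A → b ≠ ⊥ → (Delta θ b).Nonempty ∧ (Delta θ b).Finite}

/-- A (𝓑,𝓛,θ,𝓘_α;𝓙)-representation in a C*-algebra: a family of projections {P_A} and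
partial isometries {S_{α,B} : B ∈ 𝓘_α} satisfying (i)–(iv) of
Definition 2.3 of the paper. -/
def IsRepresentation {B L X : Type*} [GeneralizedBooleanAlgebra B] [DecidableEq L]
    [NonUnitalCStarAlgebra X]
    (θ : L → B → B) (I : L → Set B) (J : Set B) (P : B → X) (S : L → B → X) : Prop :=
  (∀ A, star (P A) = P A) ∧
  P ⊥ = 0 ∧ (∀ A A', P (A ⊓ A') = P A * P A') ∧
  (∀ A A', P (A ⊔ A') = P A + P A' - P (A ⊓ A')) ∧
  (∀ (A : B) (α : L), ∀ C ∈ I α, P A * S α C = S α C * P (θ α A)) ∧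
  (∀ (α α' : L), ∀ C ∈ I α, ∀ C' ∈ I α',
    star (S α C) * S α' C' = if α = α' then P (C ⊓ C') else 0) ∧
  (∀ A ∈ J, ∀ F : Finset L, ↑F = Delta θ A →
    P A = ∑ α ∈ F, S α (θ α A) * star (S α (θ α A)))

/-- θ_α for a word α = α₁α₂⋯α_n: θ_α = θ_{α_n} ∘ ⋯ ∘ θ_{α₁} (θ_∅ = id). -/
def wordTheta {B L : Type*} (θ : L → B → B) : List L → B → B
  | [], A => A
  | α :: w, A => wordTheta θ w (θ α A)

/-- `WordIso θ I P S α A x` says that `x` is the word partial isometry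
S_{α,A} = S_{α₁,B} S_{α₂,θ_{α₂}(B)} ⋯ S_{α_n,A} associated to the word α and A ∈ 𝓘_α,
where the witness B ∈ 𝓘_{α₁} satisfies A ⊆ θ_{α₂⋯α_n}(B); for the empty word
S_{∅,A} = P_A. (By well-definedness, the value does not depend on the witnesses.) -/
inductive WordIso {B L X : Type*} [GeneralizedBooleanAlgebra B] [Mul X]
    (θ : L → B → B) (I : L → Set B) (P : B → X) (S : L → B → X) :
    List L → B → X → Prop
  | nil (A : B) : WordIso θ I P S [] A (P A)
  | single (α : L) (A : B) (hA : A ∈ I α) : WordIso θ I P S [α] A (S α A)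
  | cons (α : L) (w : List L) (A C : B) (x : X) (hw : w ≠ []) (hC : C ∈ I α)
      (hA : A ≤ wordTheta θ w C) (hx : WordIso θ I P S w A x) :
      WordIso θ I P S (α :: w) A (S α C * x)

section Aux

variable {B L X : Type*} [GeneralizedBooleanAlgebra B] [DecidableEq L]
  [NonUnitalCStarAlgebra X]
  {θ : L → B → B} {I : L → Set B} {J : Set B} {P : B → X} {S : L → B → X}

lemma wordTheta_append (w₁ w₂ : List L) (A : B) :
    wordTheta θ (w₁ ++ w₂) A = wordTheta θ w₂ (wordTheta θ w₁ A) := by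
  induction w₁ generalizing A with
  | nil => rfl
  | cons δ w ih => simp [wordTheta, ih]

lemma wordTheta_inf (hθ : ∀ α, IsBoolAction (θ α)) (w : List L) (a b : B) :
    wordTheta θ w (a ⊓ b) = wordTheta θ w a ⊓ wordTheta θ w b := by
  induction w generalizing a b with
  | nil => rfl
  | cons δ w ih => simp only [wordTheta, (hθ δ).1, ih]

lemma wordTheta_mono (hθ : ∀ α, IsBoolAction (θ α)) (w : List L) {a b : B} (h : a ≤ b) :
    wordTheta θ w a ≤ wordTheta θ w b := by
  have : a ⊓ b = a := inf_eq_left.mpr h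
  rw [← inf_eq_left, ← wordTheta_inf hθ, this]

variable (hrep : IsRepresentation θ I J P S) (hI : ∀ α, BoolIdeal (I α))

lemma wordIso_nil {F : B} {x : X} (h : WordIso θ I P S [] F x) : x = P F := by
  cases h; rfl

include hrep

lemma P_idem (A : B) : P A * P A = P A := by
  rw [← hrep.2.2.1, inf_idem]

include hI in
lemma S_mul_P (α : L) {C : B} (hC : C ∈ I α) (E : B) :
    S α C * P E = S α (C ⊓ E) := by
  obtain ⟨hPstar, hPbot, hPinf, hPsup, hPS, hSS, hCK⟩ := hrep
  have hCE : C ⊓ E ∈ I α := (hI α).2.2 C hC E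
  have h1 : star (S α C) * S α C = P C := by
    simpa using hSS α α C hC C hC
  have h2 : star (S α C) * S α (C ⊓ E) = P (C ⊓ E) := by
    have := hSS α α C hC (C ⊓ E) hCE
    simpa [inf_left_idem] using this
  have h3 : star (S α (C ⊓ E)) * S α C = P (C ⊓ E) := by
    have := hSS α α (C ⊓ E) hCE C hC
    simpa [inf_right_comm, inf_idem, inf_assoc] using this
  have h4 : star (S α (C ⊓ E)) * S α (C ⊓ E) = P (C ⊓ E) := by
    simpa using hSS α α (C ⊓ E) hCE (C ⊓ E) hCE
  have e1 : P E * P C * P E = P (C ⊓ E) := by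
    rw [← hPinf, ← hPinf]
    congr 1
    rw [inf_right_comm, inf_idem, inf_comm]
  have e2 : P E * P (C ⊓ E) = P (C ⊓ E) := by
    rw [← hPinf]
    congr 1
    rw [← inf_assoc, inf_comm E C]
    exact inf_right_idem _ _
  have e3 : P (C ⊓ E) * P E = P (C ⊓ E) := by
    rw [← hPinf, inf_assoc, inf_idem]

  have t1 : P E * star (S α C) * (S α C * P E) = P (C ⊓ E) := by
    rw [mul_assoc (P E), ← mul_assoc (star (S α C)), h1, ← mul_assoc, e1]
  have t2 : P E * star (S α C) * S α (C ⊓ E) = P (C ⊓ E) := by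
    rw [mul_assoc, h2, e2]
  have t3 : star (S α (C ⊓ E)) * (S α C * P E) = P (C ⊓ E) := by
    rw [← mul_assoc, h3, e3]
  have key : star (S α C * P E - S α (C ⊓ E)) * (S α C * P E - S α (C ⊓ E)) = 0 := by
    rw [star_sub, star_mul, hPstar, sub_mul, mul_sub, mul_sub, t1, t2, t3, h4]
    simp
  have := (CStarRing.star_mul_self_eq_zero_iff _).mp key
  exact sub_eq_zero.mp this

lemma P_mul_wordIso {w : List L} {F : B} {x : X}
    (h : WordIso θ I P S w F x) (A : B) :
    P A * x = x * P (wordTheta θ w A) := by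
  obtain ⟨hPstar, hPbot, hPinf, hPsup, hPS, hSS, hCK⟩ := hrep
  induction h generalizing A with
  | nil F => rw [← hPinf, ← hPinf, inf_comm]; rfl
  | single α F hF => exact hPS A α F hF
  | cons α w F C x hw hC hA hx ih =>
      rw [← mul_assoc, hPS A α C hC, mul_assoc, ih, ← mul_assoc]
      rfl

include hI in
lemma wordIso_mul_P {w : List L} {F : B} {x : X}
    (h : WordIso θ I P S w F x) (E : B) :
    WordIso θ I P S w (F ⊓ E) (x * P E) := by
  induction h with
  | nil F =>
      rw [← hrep.2.2.1]
      exact .nil _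
  | single α F hF =>
      rw [S_mul_P hrep hI α hF E]
      exact .single α _ ((hI α).2.2 F hF E)
  | cons α w F C x hw hC hA hx ih =>
      rw [mul_assoc]
      exact .cons α w _ C _ hw hC (le_trans inf_le_left hA) ih

include hI in
lemma wordIso_mul_P_self {w : List L} {F : B} {x : X}
    (h : WordIso θ I P S w F x) : x * P F = x := by
  induction h with
  | nil F => exact P_idem hrep F
  | single α F hF => rw [S_mul_P hrep hI α hF F, inf_idem]
  | cons α w F C x hw hC hA hx ih => rw [mul_assoc, ih]

include hI in
lemma wordIso_cons {δ : L} {w : List L} {F : B} {x : X}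
    (h : WordIso θ I P S (δ :: w) F x) :
    ∃ C x', C ∈ I δ ∧ F ≤ wordTheta θ w C ∧ WordIso θ I P S w F x' ∧ x = S δ C * x' := by
  cases h with
  | single _ _ hF =>
      refine ⟨F, P F, hF, le_refl _, .nil F, ?_⟩
      rw [S_mul_P hrep hI δ hF F, inf_idem]
  | cons α w F C x hw hC hA hx => exact ⟨C, x, hC, hA, hx, rfl⟩

include hI in
lemma wordIso_append (hθ : ∀ α, IsBoolAction (θ α)) {w₁ w₂ : List L} {F G : B} {x₁ x₂ : X}
    (h₁ : WordIso θ I P S w₁ F x₁) (h₂ : WordIso θ I P S w₂ G x₂)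
    (hle : G ≤ wordTheta θ w₂ F) :
    WordIso θ I P S (w₁ ++ w₂) G (x₁ * x₂) := by
  induction h₁ with
  | nil F =>
      rw [List.nil_append, P_mul_wordIso hrep h₂ F]
      have := wordIso_mul_P hrep hI h₂ (wordTheta θ w₂ F)
      rwa [inf_eq_left.mpr hle] at this
  | single α F hF =>
      cases w₂ with
      | nil =>
          rw [List.append_nil, wordIso_nil h₂, S_mul_P hrep hI α hF G]
          have hG : F ⊓ G = G := inf_eq_right.mpr hle
          rw [hG]
          exact .single α G (hG ▸ (hI α).2.2 F hF G)
      | cons ε w₂' =>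
          exact .cons α _ G F x₂ (by simp) hF hle h₂
  | cons α w F C x' hw hC hA hx ih =>
      rw [List.cons_append, mul_assoc]
      refine .cons α _ G C _ (by simp [hw]) hC ?_ (ih hle)
      rw [wordTheta_append]
      exact le_trans hle (wordTheta_mono hθ w₂ hA)

include hI in
lemma master (hθ : ∀ α, IsBoolAction (θ α)) (β : List L) :
    ∀ (μ : List L) (C D : B) (y u : X),
    WordIso θ I P S β C y → WordIso θ I P S μ D u →
    (β = μ → star y * u = P (C ⊓ D)) ∧
    (∀ β', β' ≠ [] → β = μ ++ β' →
      ∃ z, WordIso θ I P S β' (wordTheta θ β' D ⊓ C) z ∧ star y * u = star z) ∧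
    (∀ μ', μ' ≠ [] → μ = β ++ μ' →
      ∃ z, WordIso θ I P S μ' (wordTheta θ μ' C ⊓ D) z ∧ star y * u = z) ∧
    ((¬∃ γ, β = μ ++ γ) → (¬∃ γ, μ = β ++ γ) → star y * u = 0) := by
  induction β with
  | nil =>
      intro μ C D y u hy hu
      rw [wordIso_nil hy, hrep.1]
      refine ⟨?_, ?_, ?_, ?_⟩
      · rintro rfl
        rw [wordIso_nil hu, ← hrep.2.2.1]
      · intro β' hne hb
        exact absurd hb.symm (by simp [hne])
      · intro μ' hne hm
        rw [List.nil_append] at hm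
        subst hm
        refine ⟨u * P (wordTheta θ μ C), ?_, ?_⟩
        · rw [inf_comm]
          exact wordIso_mul_P hrep hI hu _
        · rw [P_mul_wordIso hrep hu C]
      · intro h1 h2
        exact absurd ⟨μ, rfl⟩ h2
  | cons δ β₀ ih =>
      intro μ C D y u hy hu
      obtain ⟨C₁, y', hC₁, hCle, hy', rfl⟩ := wordIso_cons hrep hI hy
      cases μ with
      | nil =>
          rw [wordIso_nil hu]
          have base : star (S δ C₁ * y') * P D = star ((S δ C₁ * y') * P (wordTheta θ (δ :: β₀) D)) := by
            rw [← P_mul_wordIso hrep hy D, star_mul (P D), hrep.1]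
          refine ⟨?_, ?_, ?_, ?_⟩
          · intro h; exact absurd h (by simp)
          · intro β' hne hb
            rw [List.nil_append] at hb
            subst hb
            refine ⟨(S δ C₁ * y') * P (wordTheta θ (δ :: β₀) D), ?_, base⟩
            rw [inf_comm]
            exact wordIso_mul_P hrep hI hy _
          · intro μ' hne hm
            exact absurd hm.symm (by simp [hne])
          · intro h1 h2
            exact absurd ⟨δ :: β₀, rfl⟩ h1
      | cons ε μ₀ =>
          obtain ⟨D₁, u', hD₁, hDle, hu', rfl⟩ := wordIso_cons hrep hI hu
          have hSS := hrep.2.2.2.2.2.1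
          have hmid : star (S δ C₁ * y') * (S ε D₁ * u')
              = star y' * ((if δ = ε then P (C₁ ⊓ D₁) else 0) * u') := by
            rw [star_mul, mul_assoc, ← mul_assoc (star (S δ C₁)), hSS δ ε C₁ hC₁ D₁ hD₁]
          by_cases hde : δ = ε
          · subst hde
            have hval : star (S δ C₁ * y') * (S δ D₁ * u')
                = star y' * (u' * P (wordTheta θ μ₀ (C₁ ⊓ D₁))) := by
              rw [hmid, if_pos rfl, P_mul_wordIso hrep hu' (C₁ ⊓ D₁)]
            have hu'' : WordIso θ I P S μ₀ (D ⊓ wordTheta θ μ₀ (C₁ ⊓ D₁))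
                (u' * P (wordTheta θ μ₀ (C₁ ⊓ D₁))) :=
              wordIso_mul_P hrep hI hu' _
            have IH := ih μ₀ C (D ⊓ wordTheta θ μ₀ (C₁ ⊓ D₁)) y'
              (u' * P (wordTheta θ μ₀ (C₁ ⊓ D₁))) hy' hu''
            refine ⟨?_, ?_, ?_, ?_⟩
            · intro h
              have hb : β₀ = μ₀ := by injection h
              subst hb
              rw [hval, IH.1 rfl]
              congr 1
              rw [← inf_assoc, inf_eq_left, wordTheta_inf hθ]
              exact le_inf (le_trans inf_le_left hCle) (le_trans inf_le_right hDle)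
            · intro β' hne hb
              have hb₀ : β₀ = μ₀ ++ β' := by
                rw [List.cons_append] at hb; injection hb
              obtain ⟨z, hz, he⟩ := IH.2.1 β' hne hb₀
              refine ⟨z, ?_, by rw [hval, he]⟩
              have helem : wordTheta θ β' (D ⊓ wordTheta θ μ₀ (C₁ ⊓ D₁)) ⊓ C
                  = wordTheta θ β' D ⊓ C := by
                rw [wordTheta_inf hθ, inf_right_comm, inf_eq_left, ← wordTheta_append, ← hb₀,
                  wordTheta_inf hθ]
                refine le_inf (le_trans inf_le_right hCle) ?_
                refine le_trans inf_le_left ?_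
                have : wordTheta θ β' D ≤ wordTheta θ β' (wordTheta θ μ₀ D₁) :=
                  wordTheta_mono hθ β' hDle
                rwa [← wordTheta_append, ← hb₀] at this
              rwa [helem] at hz
            · intro μ' hne hm
              have hm₀ : μ₀ = β₀ ++ μ' := by
                rw [List.cons_append] at hm; injection hm
              obtain ⟨z, hz, he⟩ := IH.2.2.1 μ' hne hm₀
              refine ⟨z, ?_, by rw [hval, he]⟩
              have helem : wordTheta θ μ' C ⊓ (D ⊓ wordTheta θ μ₀ (C₁ ⊓ D₁))
                  = wordTheta θ μ' C ⊓ D := by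
                rw [← inf_assoc, inf_eq_left, wordTheta_inf hθ]
                refine le_inf ?_ (le_trans inf_le_right hDle)
                refine le_trans inf_le_left ?_
                have : wordTheta θ μ' C ≤ wordTheta θ μ' (wordTheta θ β₀ C₁) :=
                  wordTheta_mono hθ μ' hCle
                rwa [← wordTheta_append, ← hm₀] at this
              rwa [helem] at hz
            · intro h1 h2
              rw [hval]
              refine IH.2.2.2 ?_ ?_
              · rintro ⟨γ, hγ⟩
                exact h1 ⟨γ, by rw [hγ]; rfl⟩
              · rintro ⟨γ, hγ⟩
                exact h2 ⟨γ, by rw [hγ]; rfl⟩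
          · have hzero : star (S δ C₁ * y') * (S ε D₁ * u') = 0 := by
              rw [hmid, if_neg hde, zero_mul, mul_zero]
            refine ⟨?_, ?_, ?_, fun _ _ => hzero⟩
            · intro h
              injection h with h1 h2
              exact absurd h1 hde
            · intro β' hne hb
              rw [List.cons_append] at hb
              injection hb with h1 h2
              exact absurd h1 hde
            · intro μ' hne hm
              rw [List.cons_append] at hm
              injection hm with h1 h2
              exact absurd h1.symm hde
      
end Aux

/-- For words α,β,μ,ν ∈ 𝓛* and A ∈ 𝓘_α, B ∈ 𝓘_β, C ∈ 𝓘_μ, D ∈ 𝓘_ν,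
(S_{α,A}S_{β,B}*)(S_{μ,C}S_{ν,D}*) = S_{α,A∩B∩C}S_{ν,D∩B∩C}* if β = μ;
= S_{α,A}S_{νβ',θ_{β'}(C∩D)∩B}* if β = μβ'; = S_{αμ',θ_{μ'}(A∩B)∩C}S_{ν,D}* if μ = βμ';
and = 0 otherwise. -/
theorem word_isometry_product {B L X : Type*} [GeneralizedBooleanAlgebra B]
    [DecidableEq L] [NonUnitalCStarAlgebra X]
    (θ : L → B → B) (hθ : ∀ α, IsBoolAction (θ α))
    (I : L → Set B) (hI : ∀ α, BoolIdeal (I α)) (hRI : ∀ (α : L) (A : B), θ α A ∈ I α)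
    (J : Set B) (hJ : BoolIdeal J) (hJreg : J ⊆ BReg θ)
    (P : B → X) (S : L → B → X) (hrep : IsRepresentation θ I J P S)
    (α β μ ν : List L) (A C D E : B) (x y u v : X)
    (hx : WordIso θ I P S α A x) (hy : WordIso θ I P S β C y)
    (hu : WordIso θ I P S μ D u) (hv : WordIso θ I P S ν E v) :
    (β = μ → ∃ x' v', WordIso θ I P S α (A ⊓ C ⊓ D) x' ∧
      WordIso θ I P S ν (E ⊓ C ⊓ D) v' ∧
      (x * star y) * (u * star v) = x' * star v') ∧
    (∀ β' : List L, β' ≠ [] → β = μ ++ β' →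
      ∃ z, WordIso θ I P S (ν ++ β') (wordTheta θ β' (D ⊓ E) ⊓ C) z ∧
        (x * star y) * (u * star v) = x * star z) ∧
    (∀ μ' : List L, μ' ≠ [] → μ = β ++ μ' →
      ∃ z, WordIso θ I P S (α ++ μ') (wordTheta θ μ' (A ⊓ C) ⊓ D) z ∧
        (x * star y) * (u * star v) = z * star v) ∧
    ((¬∃ γ, β = μ ++ γ) → (¬∃ γ, μ = β ++ γ) → (x * star y) * (u * star v) = 0) := by
  obtain ⟨M1, M2, M3, M4⟩ := master hrep hI hθ β μ C D y u hy hu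
  have key : (x * star y) * (u * star v) = x * ((star y * u) * star v) := by
    rw [mul_assoc, ← mul_assoc (star y)]
  refine ⟨?_, ?_, ?_, ?_⟩
  · rintro rfl
    refine ⟨x * P (C ⊓ D), v * P (C ⊓ D), ?_, ?_, ?_⟩
    · have h := wordIso_mul_P hrep hI hx (C ⊓ D)
      rwa [← inf_assoc] at h
    · have h := wordIso_mul_P hrep hI hv (C ⊓ D)
      rwa [← inf_assoc] at h
    · rw [key, M1 rfl, star_mul, hrep.1]
      have h : P (C ⊓ D) * (P (C ⊓ D) * star v) = P (C ⊓ D) * star v := by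
        rw [← mul_assoc, P_idem hrep]
      rw [mul_assoc x, h]
  · intro β' hne hb
    obtain ⟨z₀, hz₀, he⟩ := M2 β' hne hb
    have hz₁ := wordIso_mul_P hrep hI hz₀ (wordTheta θ β' E)
    have helem : wordTheta θ β' D ⊓ C ⊓ wordTheta θ β' E
        = wordTheta θ β' (D ⊓ E) ⊓ C := by
      rw [wordTheta_inf hθ, inf_right_comm]
    rw [helem] at hz₁
    have hle : wordTheta θ β' (D ⊓ E) ⊓ C ≤ wordTheta θ β' E := by
      rw [wordTheta_inf hθ]
      exact le_trans inf_le_left inf_le_right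
    refine ⟨v * (z₀ * P (wordTheta θ β' E)), wordIso_append hrep hI hθ hv hz₁ hle, ?_⟩
    have hvz : v * z₀ = v * (z₀ * P (wordTheta θ β' E)) := by
      conv_lhs => rw [← wordIso_mul_P_self hrep hI hv]
      rw [mul_assoc, P_mul_wordIso hrep hz₀ E]
    rw [key, he, ← star_mul, hvz]
  · intro μ' hne hm
    obtain ⟨z₀, hz₀, he⟩ := M3 μ' hne hm
    have hz₁ := wordIso_mul_P hrep hI hz₀ (wordTheta θ μ' A)
    have helem : wordTheta θ μ' C ⊓ D ⊓ wordTheta θ μ' A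
        = wordTheta θ μ' (A ⊓ C) ⊓ D := by
      rw [wordTheta_inf hθ, inf_right_comm, inf_comm (wordTheta θ μ' C) (wordTheta θ μ' A)]
    rw [helem] at hz₁
    have hle : wordTheta θ μ' (A ⊓ C) ⊓ D ≤ wordTheta θ μ' A := by
      rw [wordTheta_inf hθ]
      exact le_trans inf_le_left inf_le_left
    refine ⟨x * (z₀ * P (wordTheta θ μ' A)), wordIso_append hrep hI hθ hx hz₁ hle, ?_⟩
    have hxz : x * z₀ = x * (z₀ * P (wordTheta θ μ' A)) := by
      conv_lhs => rw [← wordIso_mul_P_self hrep hI hx]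
      rw [mul_assoc, P_mul_wordIso hrep hz₀ A]
    rw [key, he, ← hxz, ← mul_assoc]
  · intro h1 h2
    rw [key, M4 h1 h2, zero_mul, mul_zero]
end

section
/- Let 𝓑 be a generalized Boolean algebra and for A ∈ 𝓑 let χ_A = 1_{Z(A)} ∈ C₀(𝓑̂) be the characteristic function of the cylinder set. Let 𝓐(𝓑) be the C*-subalgebra generated by {χ_A}. If 𝓘 is a closed ideal of 𝓐(𝓑), then 𝓘 = closed span of {χ_A : A ∈ 𝓑, χ_A ∈ 𝓘}. -/
open scoped ZeroAtInfty
open Filter Topology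

/-- The character space 𝓑̂ of a generalized Boolean algebra 𝓑: the space of ultrafilters
of 𝓑, realized as the nonzero Boolean characters 𝓑 → Bool, with the topology of
pointwise convergence. -/
abbrev BoolCharSpace (B : Type*) [GeneralizedBooleanAlgebra B] : Type _ :=
  {φ : B → Bool // (∀ a b, φ (a ⊓ b) = (φ a && φ b)) ∧ (∀ a b, φ (a ⊔ b) = (φ a || φ b)) ∧
    (∀ a b, φ (a \ b) = (φ a && !φ b)) ∧ φ ⊥ = false ∧ ∃ a, φ a = true}

variable {B : Type*} [GeneralizedBooleanAlgebra B]

theorem isCompact_cylinder (A : B) :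
    IsCompact {φ : BoolCharSpace B | φ.1 A = true} := by
  rw [Subtype.isCompact_iff]
  set K : Set (B → Bool) :=
    {φ | ((∀ a b, φ (a ⊓ b) = (φ a && φ b)) ∧ (∀ a b, φ (a ⊔ b) = (φ a || φ b)) ∧
      (∀ a b, φ (a \ b) = (φ a && !φ b)) ∧ φ ⊥ = false) ∧ φ A = true} with hK
  have himg : Subtype.val '' {φ : BoolCharSpace B | φ.1 A = true} = K := by
    ext φ
    constructor
    · rintro ⟨ψ, hψ, rfl⟩
      exact ⟨⟨ψ.2.1, ψ.2.2.1, ψ.2.2.2.1, ψ.2.2.2.2.1⟩, hψ⟩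
    · rintro ⟨⟨h1, h2, h3, h4⟩, h5⟩
      exact ⟨⟨φ, h1, h2, h3, h4, ⟨A, h5⟩⟩, h5, rfl⟩
  rw [himg]
  have c1 : IsClosed {φ : B → Bool | ∀ a b, φ (a ⊓ b) = (φ a && φ b)} := by
    have he : {φ : B → Bool | ∀ a b, φ (a ⊓ b) = (φ a && φ b)} =
        ⋂ (a : B), ⋂ (b : B), {φ : B → Bool | φ (a ⊓ b) = (φ a && φ b)} := by
      ext φ; simp
    rw [he]
    refine isClosed_iInter fun a => isClosed_iInter fun b => ?_
    have hcont : Continuous ((fun p : Bool × Bool => p.1 && p.2) ∘ fun φ : B → Bool => (φ a, φ b)) :=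
      Continuous.comp continuous_of_discreteTopology
        ((continuous_apply a).prodMk (continuous_apply b))
    exact isClosed_eq (continuous_apply _) hcont
  have c2 : IsClosed {φ : B → Bool | ∀ a b, φ (a ⊔ b) = (φ a || φ b)} := by
    have he : {φ : B → Bool | ∀ a b, φ (a ⊔ b) = (φ a || φ b)} =
        ⋂ (a : B), ⋂ (b : B), {φ : B → Bool | φ (a ⊔ b) = (φ a || φ b)} := by
      ext φ; simp
    rw [he]
    refine isClosed_iInter fun a => isClosed_iInter fun b => ?_
    have hcont : Continuous ((fun p : Bool × Bool => p.1 || p.2) ∘ fun φ : B → Bool => (φ a, φ b)) :=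
      Continuous.comp continuous_of_discreteTopology
        ((continuous_apply a).prodMk (continuous_apply b))
    exact isClosed_eq (continuous_apply _) hcont
  have c3 : IsClosed {φ : B → Bool | ∀ a b, φ (a \ b) = (φ a && !φ b)} := by
    have he : {φ : B → Bool | ∀ a b, φ (a \ b) = (φ a && !φ b)} =
        ⋂ (a : B), ⋂ (b : B), {φ : B → Bool | φ (a \ b) = (φ a && !φ b)} := by
      ext φ; simp
    rw [he]
    refine isClosed_iInter fun a => isClosed_iInter fun b => ?_
    have hcont : Continuous ((fun p : Bool × Bool => p.1 && !p.2) ∘ fun φ : B → Bool => (φ a, φ b)) :=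
      Continuous.comp continuous_of_discreteTopology
        ((continuous_apply a).prodMk (continuous_apply b))
    exact isClosed_eq (continuous_apply _) hcont
  have c4 : IsClosed {φ : B → Bool | φ ⊥ = false} :=
    isClosed_eq (continuous_apply _) continuous_const
  have c5 : IsClosed {φ : B → Bool | φ A = true} :=
    isClosed_eq (continuous_apply _) continuous_const
  have hKeq : K = ({φ : B → Bool | ∀ a b, φ (a ⊓ b) = (φ a && φ b)} ∩
      {φ | ∀ a b, φ (a ⊔ b) = (φ a || φ b)} ∩ {φ | ∀ a b, φ (a \ b) = (φ a && !φ b)} ∩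
      {φ | φ ⊥ = false}) ∩ {φ | φ A = true} := by
    ext φ
    simp only [hK, Set.mem_setOf_eq, Set.mem_inter_iff]
    tauto
  have hclosed : IsClosed K := by
    rw [hKeq]
    exact ((((c1.inter c2).inter c3).inter c4)).inter c5
  exact hclosed.isCompact

/-- χ_A = 1_{Z(A)} ∈ C₀(𝓑̂): the characteristic function of the compact open
cylinder set Z(A) = {φ ∈ 𝓑̂ : φ(A) = 1}. -/
noncomputable def chi (A : B) : C₀(BoolCharSpace B, ℂ) where
  toFun φ := if φ.1 A then 1 else 0
  continuous_toFun :=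
    (continuous_of_discreteTopology (f := fun t : Bool => if t then (1 : ℂ) else 0)).comp
      ((continuous_apply A).comp continuous_subtype_val)
  zero_at_infty' := by
    refine HasCompactSupport.is_zero_at_infty ?_
    refine HasCompactSupport.intro (isCompact_cylinder A) ?_
    intro φ hφ
    simp only [Set.mem_setOf_eq] at hφ
    simp [hφ]

/-- 𝓐(𝓑): the C*-subalgebra of C₀(𝓑̂) generated by {χ_A : A ∈ 𝓑}
(equivalently, the closed linear span of {χ_A : A ∈ 𝓑}). -/
noncomputable def boolAlgebraOfChars (B : Type*) [GeneralizedBooleanAlgebra B] :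
    Set C₀(BoolCharSpace B, ℂ) :=
  ((NonUnitalStarAlgebra.adjoin ℂ
    (Set.range (chi (B := B)))).topologicalClosure : Set C₀(BoolCharSpace B, ℂ))

/-!
Every element of `𝓐(𝓑)` is a uniform limit of step functions `g = ∑ cᵢ χ_{Aᵢ}`, and every level
set `{g ∈ T}` with `0 ∉ T` of such a `g` is a cylinder `Z(C)`. Given `f ∈ 𝓘` and `ε > 0`, take `g`
within `ε / 3` of `f` and `Z(C) = {|g| > 2ε/3}`. Then `|f| ≥ ε/3` on `Z(C)`, so
`u = χ_C - t f̄ f χ_C` has norm `< 1` for small `t > 0`, and `χ_C`, the limit of the Neumann-type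
partial sums `(χ_C - u)(χ_C + u + ⋯ + uⁿ)`, lies in `𝓘`. Finally `g χ_C` is a combination of the
`χ_{A ⊓ C} ∈ 𝓘` and lies within `ε` of `f`.
-/

namespace ZeroAtInftyContinuousMap

variable {α β : Type*} [TopologicalSpace α] [SeminormedAddCommGroup β]

lemma norm_apply_le (f : C₀(α, β)) (x : α) : ‖f x‖ ≤ ‖f‖ := by
  rw [← norm_toBCF_eq_norm]
  exact f.toBCF.norm_coe_le_norm x

lemma norm_le_of_forall {f : C₀(α, β)} {C : ℝ} (hC : 0 ≤ C) (h : ∀ x, ‖f x‖ ≤ C) : ‖f‖ ≤ C := by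
  rw [← norm_toBCF_eq_norm]
  exact (BoundedContinuousFunction.norm_le hC).2 h

end ZeroAtInftyContinuousMap

open ZeroAtInftyContinuousMap

/-- `e` is the limit of `z 0 = e - u`, `z (n+1) = (e - u) + u z n`, because
`u e = u` gives `z (n+1) - e = u (z n - e)`. -/
theorem mem_of_sub_mem_of_norm_lt_one {R : Type*} [NonUnitalNormedRing R] {I : Set R}
    (hclosed : IsClosed I) (hadd : ∀ x ∈ I, ∀ y ∈ I, x + y ∈ I) {e u : R}
    (hmul : ∀ y ∈ I, u * y ∈ I) (hue : u * e = u) (he : e - u ∈ I) (hu : ‖u‖ < 1) :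
    e ∈ I := by
  let z : ℕ → R := fun n => Nat.rec (e - u) (fun _ zn => e - u + u * zn) n
  have hz_mem (n : ℕ) : z n ∈ I := by
    induction n with
    | zero => exact he
    | succ n ih => exact hadd _ he _ (hmul _ ih)
  have hz_norm (n : ℕ) : ‖z n - e‖ ≤ ‖u‖ ^ (n + 1) := by
    induction n with
    | zero => simp [z]
    | succ n ih =>
      have hstep : z (n + 1) - e = u * (z n - e) := by
        change e - u + u * z n - e = _
        rw [mul_sub, hue]; abel
      rw [hstep, pow_succ']
      exact (norm_mul_le _ _).trans (mul_le_mul_of_nonneg_left ih (norm_nonneg u))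
  have hlim : Tendsto z atTop (𝓝 e) := by
    rw [tendsto_iff_norm_sub_tendsto_zero]
    refine squeeze_zero (fun n => norm_nonneg _) hz_norm ?_
    exact (tendsto_pow_atTop_nhds_zero_of_lt_one (norm_nonneg u) hu).comp (tendsto_add_atTop_nat 1)
  exact hclosed.mem_of_tendsto hlim (Eventually.of_forall hz_mem)

/-- Apply `mem_of_sub_mem_of_norm_lt_one` to `u = e - t f̄ f e` with `t = (‖f‖ + δ)⁻²`:
it vanishes where `e = 0` and satisfies `0 ≤ u ≤ 1 - t δ²` where `e = 1`. -/
theorem mem_of_le_norm_of_eq_one {X : Type*} [TopologicalSpace X]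
    {S : NonUnitalStarSubalgebra ℂ C₀(X, ℂ)} {I : Set C₀(X, ℂ)} (hsub : I ⊆ S)
    (hclosed : IsClosed I) (hadd : ∀ f ∈ I, ∀ g ∈ I, f + g ∈ I)
    (hsmul : ∀ c : ℂ, ∀ f ∈ I, c • f ∈ I) (hmul : ∀ f ∈ I, ∀ g ∈ S, f * g ∈ I)
    {f e : C₀(X, ℂ)} (hf : f ∈ I) (he : e ∈ S) (he01 : ∀ x, e x = 0 ∨ e x = 1)
    {δ : ℝ} (hδ : 0 < δ) (hfe : ∀ x, e x = 1 → δ ≤ ‖f x‖) : e ∈ I := by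
  set t : ℝ := ((‖f‖ + δ) ^ 2)⁻¹
  have ht0 : 0 < t := by positivity
  set u := e - (t : ℂ) • (star f * (f * e)) with hu
  have heu : e - u ∈ I := by
    rw [hu, sub_sub_cancel, mul_comm]
    exact hsmul _ _ (hmul _ (hmul f hf e he) _ (star_mem (hsub hf)))
  have hmul_u : ∀ y ∈ I, u * y ∈ I := fun y hy => by
    rw [mul_comm]
    exact hmul y hy u (by simpa using sub_mem he (hsub heu))
  have hu_apply (x : X) : u x = e x * ((1 - t * ‖f x‖ ^ 2 : ℝ) : ℂ) := by
    simp only [hu, coe_sub, coe_smul, coe_mul, coe_star, Pi.sub_apply, Pi.smul_apply,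
      Pi.mul_apply, Pi.star_apply, smul_eq_mul, RCLike.star_def]
    push_cast
    rw [← Complex.mul_conj']
    ring
  have hue : u * e = u := by
    ext x
    rcases he01 x with h | h <;> simp [hu_apply, h]
  have ht_mul (r : ℝ) (hr0 : 0 ≤ r) (hr : r ≤ ‖f‖ + δ) : t * r ^ 2 ≤ 1 := by
    calc t * r ^ 2 ≤ t * (‖f‖ + δ) ^ 2 := by gcongr
      _ = 1 := inv_mul_cancel₀ (by positivity)
  have hu_norm : ‖u‖ ≤ 1 - t * δ ^ 2 := by
    have hδ1 : t * δ ^ 2 ≤ 1 := ht_mul δ hδ.le (by linarith [norm_nonneg f])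
    refine norm_le_of_forall (by linarith) fun x => ?_
    rcases he01 x with h | h
    · simp [hu_apply, h, hδ1]
    · have hfx : t * ‖f x‖ ^ 2 ≤ 1 := ht_mul _ (norm_nonneg _) (by linarith [norm_apply_le f x])
      have hδfx : t * δ ^ 2 ≤ t * ‖f x‖ ^ 2 := by gcongr; exact hfe x h
      rw [hu_apply, h, one_mul, Complex.norm_real, Real.norm_of_nonneg (by linarith)]
      linarith
  refine mem_of_sub_mem_of_norm_lt_one hclosed hadd hmul_u hue heu (hu_norm.trans_lt ?_)
  have : 0 < t * δ ^ 2 := by positivity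
  linarith

/-- The cylinder set `Z(A)`. -/
def cylinder (A : B) : Set (BoolCharSpace B) := {φ | φ.1 A = true}

@[simp]
lemma mem_cylinder {A : B} {φ : BoolCharSpace B} : φ ∈ cylinder A ↔ φ.1 A = true := Iff.rfl

lemma cylinder_inf (A A' : B) : cylinder (A ⊓ A') = cylinder A ∩ cylinder A' := by
  ext φ; simp [φ.2.1]

lemma cylinder_sup (A A' : B) : cylinder (A ⊔ A') = cylinder A ∪ cylinder A' := by
  ext φ; simp [φ.2.2.1]

lemma cylinder_sdiff (A A' : B) : cylinder (A \ A') = cylinder A \ cylinder A' := by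
  ext φ; simp [φ.2.2.2.1]

@[simp]
lemma cylinder_bot : cylinder (⊥ : B) = ∅ := by
  ext φ; simp [φ.2.2.2.2.1]

lemma coe_chi (A : B) : ⇑(chi A) = (cylinder A).indicator 1 := by
  ext φ; by_cases h : φ.1 A = true <;> simp [chi, h]

lemma chi_mul_chi (A A' : B) : chi A * chi A' = chi (A ⊓ A') := by
  ext φ; simp [coe_chi, cylinder_inf, Set.inter_indicator_one]

lemma star_chi (A : B) : star (chi A) = chi A := by
  ext φ; by_cases h : φ ∈ cylinder A <;> simp [coe_chi, h]

lemma chi_mem_boolAlgebraOfChars (A : B) : chi A ∈ boolAlgebraOfChars B :=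
  NonUnitalStarSubalgebra.le_topologicalClosure _
    (NonUnitalStarAlgebra.subset_adjoin ℂ _ ⟨A, rfl⟩)

lemma adjoin_range_chi_subset_span :
    (NonUnitalStarAlgebra.adjoin ℂ (Set.range (chi (B := B))) : Set C₀(BoolCharSpace B, ℂ)) ⊆
      (Submodule.span ℂ (Set.range (chi (B := B))) : Set C₀(BoolCharSpace B, ℂ)) := by
  let chis : Subsemigroup C₀(BoolCharSpace B, ℂ) :=
    { carrier := Set.range chi
      mul_mem' := by
        rintro _ _ ⟨A, rfl⟩ ⟨A', rfl⟩
        exact ⟨A ⊓ A', (chi_mul_chi A A').symm⟩ }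
  have hstar : star (Set.range (chi (B := B))) ⊆ Set.range chi := by
    rintro f ⟨A, hA⟩
    exact ⟨A, by rw [← star_chi, hA, star_star]⟩
  intro f hf
  change f ∈ (NonUnitalStarAlgebra.adjoin ℂ (Set.range chi)).toSubmodule at hf
  rw [NonUnitalStarAlgebra.adjoin_eq_span] at hf
  exact Submodule.span_mono
    (Subsemigroup.closure_le (S := chis).2 (Set.union_subset le_rfl hstar)) hf

lemma boolAlgebraOfChars_subset_closure_span :
    boolAlgebraOfChars B ⊆
      closure (Submodule.span ℂ (Set.range (chi (B := B))) : Set C₀(BoolCharSpace B, ℂ)) :=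
  closure_mono adjoin_range_chi_subset_span

lemma exists_cylinder_eq_inter_preimage {g : C₀(BoolCharSpace B, ℂ)}
    (hg : g ∈ Submodule.span ℂ (Set.range chi)) (T : Set ℂ) (b : B) :
    ∃ C, cylinder C = cylinder b ∩ g ⁻¹' T := by
  rw [← Submodule.mem_toAddSubmonoid, Submodule.span_eq_closure] at hg
  induction hg using AddSubmonoid.closure_induction_left generalizing T b with
  | zero =>
    by_cases hT : (0 : ℂ) ∈ T
    · exact ⟨b, by ext φ; simp [hT]⟩
    · exact ⟨⊥, by ext φ; simp [hT]⟩
  | add_left _ hx y _ ih =>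
    obtain ⟨c, -, _, ⟨A, rfl⟩, rfl⟩ := hx
    obtain ⟨C₁, hC₁⟩ := ih ((c + ·) ⁻¹' T) (b ⊓ A)
    obtain ⟨C₂, hC₂⟩ := ih T (b \ A)
    refine ⟨C₁ ⊔ C₂, ?_⟩
    rw [cylinder_sup, hC₁, hC₂, cylinder_inf, cylinder_sdiff]
    ext φ
    by_cases hφ : φ ∈ cylinder A <;> simp [coe_chi, hφ]

lemma exists_support_subset_cylinder {g : C₀(BoolCharSpace B, ℂ)}
    (hg : g ∈ Submodule.span ℂ (Set.range chi)) : ∃ D, Function.support g ⊆ cylinder D := by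
  induction hg using Submodule.span_induction with
  | mem _ h =>
    obtain ⟨A, rfl⟩ := h
    exact ⟨A, by rw [coe_chi]; exact Set.support_indicator_subset⟩
  | zero => exact ⟨⊥, by simp⟩
  | add x y _ _ hx hy =>
    obtain ⟨D₁, h₁⟩ := hx
    obtain ⟨D₂, h₂⟩ := hy
    refine ⟨D₁ ⊔ D₂, ?_⟩
    rw [coe_add, cylinder_sup]
    exact (Function.support_add _ _).trans (Set.union_subset_union h₁ h₂)
  | smul c x _ hx =>
    obtain ⟨D, h⟩ := hx
    exact ⟨D, by rw [coe_smul]; exact (Function.support_const_smul_subset c x).trans h⟩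

lemma exists_cylinder_eq_preimage {g : C₀(BoolCharSpace B, ℂ)}
    (hg : g ∈ Submodule.span ℂ (Set.range chi)) {T : Set ℂ} (hT : (0 : ℂ) ∉ T) :
    ∃ C, cylinder C = g ⁻¹' T := by
  obtain ⟨D, hD⟩ := exists_support_subset_cylinder hg
  obtain ⟨C, hC⟩ := exists_cylinder_eq_inter_preimage hg T D
  refine ⟨C, hC.trans (Set.inter_eq_right.2 fun φ hφ => hD ?_)⟩
  exact fun h => hT (h ▸ hφ)

lemma mul_chi_mem_span_chi_mem (I : Set C₀(BoolCharSpace B, ℂ))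
    (hmul : ∀ f ∈ I, ∀ g ∈ boolAlgebraOfChars B, f * g ∈ I) {g : C₀(BoolCharSpace B, ℂ)}
    (hg : g ∈ Submodule.span ℂ (Set.range chi)) {C : B} (hC : chi C ∈ I) :
    g * chi C ∈ Submodule.span ℂ {f | ∃ A : B, f = chi A ∧ f ∈ I} := by
  induction hg using Submodule.span_induction with
  | mem _ h =>
    obtain ⟨A, rfl⟩ := h
    refine Submodule.subset_span ⟨A ⊓ C, chi_mul_chi A C, ?_⟩
    rw [mul_comm]
    exact hmul _ hC _ (chi_mem_boolAlgebraOfChars A)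
  | zero => simp
  | add x y _ _ hx hy => rw [add_mul]; exact add_mem hx hy
  | smul c x _ hx => rw [smul_mul_assoc]; exact Submodule.smul_mem _ c hx

lemma mem_closure_span_chi_mem {I : Set C₀(BoolCharSpace B, ℂ)}
    (hsub : I ⊆ boolAlgebraOfChars B) (hclosed : IsClosed I)
    (hadd : ∀ f ∈ I, ∀ g ∈ I, f + g ∈ I) (hsmul : ∀ c : ℂ, ∀ f ∈ I, c • f ∈ I)
    (hmul : ∀ f ∈ I, ∀ g ∈ boolAlgebraOfChars B, f * g ∈ I)
    {f : C₀(BoolCharSpace B, ℂ)} (hf : f ∈ I) :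
    f ∈ closure (Submodule.span ℂ {f | ∃ A : B, f = chi A ∧ f ∈ I} :
      Set C₀(BoolCharSpace B, ℂ)) := by
  rw [Metric.mem_closure_iff]
  intro ε hε
  obtain ⟨g, hg, hfg⟩ := Metric.mem_closure_iff.1
    (boolAlgebraOfChars_subset_closure_span (hsub hf)) (ε / 3) (by positivity)
  obtain ⟨C, hC⟩ := exists_cylinder_eq_preimage hg (T := {z | 2 * ε / 3 < ‖z‖})
    (by simp only [Set.mem_ofPred_eq, norm_zero, not_lt]; positivity)
  have hfg_apply (φ : BoolCharSpace B) : ‖f φ - g φ‖ < ε / 3 := by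
    rw [dist_eq_norm] at hfg
    exact (norm_apply_le (f - g) φ).trans_lt hfg
  have hCI : chi C ∈ I := by
    refine mem_of_le_norm_of_eq_one
      (S := (NonUnitalStarAlgebra.adjoin ℂ (Set.range chi)).topologicalClosure)
      hsub hclosed hadd hsmul hmul hf (chi_mem_boolAlgebraOfChars C) (fun φ => ?_)
      (δ := ε / 3) (by positivity) (fun φ hφ => ?_)
    · by_cases h : φ ∈ cylinder C <;> simp [coe_chi, h]
    · have h : φ ∈ cylinder C := by by_contra h; simp [coe_chi, h] at hφ
      rw [hC] at h
      have := norm_sub_norm_le (g φ) (f φ)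
      rw [norm_sub_rev] at this
      simp only [Set.mem_preimage, Set.mem_ofPred_eq] at h
      linarith [hfg_apply φ]
  have hcut : ‖g - g * chi C‖ ≤ 2 * ε / 3 := by
    refine norm_le_of_forall (by positivity) fun φ => ?_
    by_cases h : φ ∈ cylinder C
    · simp only [coe_sub, coe_mul, coe_chi, Pi.sub_apply, Pi.mul_apply, h, Set.indicator_of_mem,
        Pi.one_apply, mul_one, sub_self, norm_zero]
      positivity
    · have hg_small : ¬ 2 * ε / 3 < ‖g φ‖ := by rwa [hC] at h
      simpa [coe_chi, h] using hg_small
  refine ⟨g * chi C, mul_chi_mem_span_chi_mem I hmul hg hCI, ?_⟩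
  calc dist f (g * chi C) ≤ dist f g + dist g (g * chi C) := dist_triangle _ _ _
    _ < ε / 3 + 2 * ε / 3 := add_lt_add_of_lt_of_le hfg (by rwa [dist_eq_norm])
    _ = ε := by ring

/-- If 𝓘 is a closed ideal of 𝓐(𝓑), then
𝓘 = closed span of {χ_A : A ∈ 𝓑, χ_A ∈ 𝓘}. -/
theorem closed_ideal_is_span_of_chis {B : Type*} [GeneralizedBooleanAlgebra B]
    (I : Set C₀(BoolCharSpace B, ℂ))
    (hsub : I ⊆ boolAlgebraOfChars B)
    (hclosed : IsClosed I)
    (hzero : (0 : C₀(BoolCharSpace B, ℂ)) ∈ I)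
    (hadd : ∀ f ∈ I, ∀ g ∈ I, f + g ∈ I)
    (hsmul : ∀ c : ℂ, ∀ f ∈ I, c • f ∈ I)
    (hmul : ∀ f ∈ I, ∀ g ∈ boolAlgebraOfChars B, f * g ∈ I ∧ g * f ∈ I) :
    I = closure (Submodule.span ℂ {f : C₀(BoolCharSpace B, ℂ) | ∃ A : B, f = chi A ∧ f ∈ I}
      : Set C₀(BoolCharSpace B, ℂ)) := by
  refine subset_antisymm (fun f hf => mem_closure_span_chi_mem hsub hclosed hadd hsmul
    (fun f hf g hg => (hmul f hf g hg).1) hf) (closure_minimal (fun f hf => ?_) hclosed)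
  induction hf using Submodule.span_induction with
  | mem _ h => obtain ⟨-, -, h⟩ := h; exact h
  | zero => exact hzero
  | add x y _ _ hx hy => exact hadd x hx y hy
  | smul c x _ hx => exact hsmul c x hx
end

section
/- Let (𝓑,𝓛,θ,𝓘_α;𝓙) be a relative generalized Boolean dynamical system and define 𝓑̃ = {(A,[B]_𝓙) : A,B ∈ 𝓑, [A]_{𝓑_reg} = [B]_{𝓑_reg}} with componentwise operations (A₁,[B₁])∪(A₂,[B₂])=(A₁∪A₂,[B₁∪B₂]), similarly for ∩ and \, and bottom (∅,[∅]). Then 𝓑̃ is a generalized Boolean algebra, and defining θ̃_α(A,[B]) = (θ_α(A),[θ_α(A)]) makes (𝓑̃,𝓛,θ̃) a Boolean dynamical system whose set of regular elements is 𝓑̃_reg = {(A,[∅]) : A ∈ 𝓑_reg}. -/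
open scoped BigOperators

/-- The carrier of 𝓑̃ before passing to the quotient: pairs (A,B) with
[A]_{𝓑_reg} = [B]_{𝓑_reg}. -/
def PairCarrier {B L : Type*} [GeneralizedBooleanAlgebra B] (θ : L → B → B) : Type _ :=
  {p : B × B // ∃ C ∈ BReg θ, p.1 ⊔ C = p.2 ⊔ C}

/-- The setoid identifying (A,B₁) and (A,B₂) when [B₁]_𝓙 = [B₂]_𝓙, so that the quotient
is 𝓑̃ = {(A,[B]_𝓙) : [A]_{𝓑_reg} = [B]_{𝓑_reg}}. -/
def pairSetoid {B L : Type*} [GeneralizedBooleanAlgebra B] (θ : L → B → B)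
    (J : Set B) (hJ : BoolIdeal J) : Setoid (PairCarrier θ) where
  r q q' := q.1.1 = q'.1.1 ∧ ∃ C ∈ J, q.1.2 ⊔ C = q'.1.2 ⊔ C
  iseqv := by
    constructor
    · intro q
      obtain ⟨c, hc⟩ := hJ.1
      exact ⟨rfl, c, hc, rfl⟩
    · rintro q q' ⟨h, c, hc, hr⟩
      exact ⟨h.symm, c, hc, hr.symm⟩
    · rintro q q' q'' ⟨h1, d, hd, hr1⟩ ⟨h2, e, he, hr2⟩
      refine ⟨h1.trans h2, d ⊔ e, hJ.2.1 d hd e he, ?_⟩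
      calc q.1.2 ⊔ (d ⊔ e) = q.1.2 ⊔ d ⊔ e := by rw [sup_assoc]
        _ = q'.1.2 ⊔ d ⊔ e := by rw [hr1]
        _ = q'.1.2 ⊔ e ⊔ d := by rw [sup_right_comm]
        _ = q''.1.2 ⊔ e ⊔ d := by rw [hr2]
        _ = q''.1.2 ⊔ (d ⊔ e) := by rw [sup_right_comm, sup_assoc]

/-!
Differing by an element of an ideal is a congruence for `⊓`, `⊔` and `\`. Hence the pairs
`(A, B)` with `[A]_{𝓑_reg} = [B]_{𝓑_reg}` form a generalized Boolean subalgebra of `𝓑 × 𝓑`,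
and identifying second components modulo `𝓙` is a congruence on it, so the quotient `𝓑̃`
inherits the algebra structure. `θ̃_α` factors through the first component, which is a Boolean
homomorphism, so it is an action and `λ_{(A, [B])} = λ_A`. If `(A, [B])` is regular, testing
with the elements `(b, [b ∩ B])` below it shows that `A` is regular, and `(∅, [B])`, which lies
below it and is killed by every `θ̃_α`, must vanish, i.e. `B ∈ 𝓙`. Conversely, an element below
`(A, [∅])` with `A` regular is nonzero only if its first component is.
-/

section
variable {B : Type*} [GeneralizedBooleanAlgebra B] {a b c a' b' : B}

theorem sup_eq_sup_iff_sdiff_le : a ⊔ c = b ⊔ c ↔ a \ b ≤ c ∧ b \ a ≤ c :=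
  ⟨fun h => ⟨sdiff_le_iff.2 (h ▸ le_sup_left), sdiff_le_iff.2 (h.symm ▸ le_sup_left)⟩,
    fun h => le_antisymm (sup_le (sdiff_le_iff.1 h.1) le_sup_right)
      (sup_le (sdiff_le_iff.1 h.2) le_sup_right)⟩

theorem inf_sdiff_inf_le_sup : (a ⊓ a') \ (b ⊓ b') ≤ a \ b ⊔ a' \ b' := by
  rw [sdiff_inf]
  exact sup_le_sup (sdiff_le_sdiff_right inf_le_left) (sdiff_le_sdiff_right inf_le_right)

theorem sup_sdiff_sup_le_sup : (a ⊔ a') \ (b ⊔ b') ≤ a \ b ⊔ a' \ b' := by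
  rw [sup_sdiff]
  exact sup_le_sup (sdiff_le_sdiff_left le_sup_left) (sdiff_le_sdiff_left le_sup_right)

theorem sdiff_sdiff_sdiff_le_sup : (a \ a') \ (b \ b') ≤ a \ b ⊔ b' \ a' := by
  rw [sdiff_sdiff_right]
  refine sup_le_sup (sdiff_le_sdiff_right sdiff_le) (le_sdiff.2 ⟨inf_le_right, ?_⟩)
  exact disjoint_sdiff_self_left.mono_left (inf_le_left.trans inf_le_left)

namespace BoolIdeal

variable {I : Set B}

theorem sup_mem (hI : BoolIdeal I) (ha : a ∈ I) (hb : b ∈ I) : a ⊔ b ∈ I := hI.2.1 a ha b hb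

theorem mem_of_le (hI : BoolIdeal I) (hb : b ∈ I) (h : a ≤ b) : a ∈ I := by
  simpa [inf_eq_right.2 h] using hI.2.2 b hb a

theorem bot_mem (hI : BoolIdeal I) : ⊥ ∈ I :=
  hI.1.elim fun _ hc => hI.mem_of_le hc bot_le

end BoolIdeal

/-- For an ideal `I`, this is `[a]_I = [b]_I`. -/
def IdealRel (I : Set B) (a b : B) : Prop := ∃ c ∈ I, a ⊔ c = b ⊔ c

namespace IdealRel

variable {I : Set B}

theorem iff_sdiff_mem (hI : BoolIdeal I) : IdealRel I a b ↔ a \ b ∈ I ∧ b \ a ∈ I := by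
  constructor
  · rintro ⟨c, hc, h⟩
    have hle := sup_eq_sup_iff_sdiff_le.1 h
    exact ⟨hI.mem_of_le hc hle.1, hI.mem_of_le hc hle.2⟩
  · rintro ⟨hab, hba⟩
    exact ⟨_, hI.sup_mem hab hba, sup_eq_sup_iff_sdiff_le.2 ⟨le_sup_left, le_sup_right⟩⟩

theorem refl (hI : BoolIdeal I) (a : B) : IdealRel I a a := ⟨⊥, hI.bot_mem, rfl⟩

theorem bot_iff (hI : BoolIdeal I) : IdealRel I a ⊥ ↔ a ∈ I := by
  simp [iff_sdiff_mem hI, hI.bot_mem]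

theorem mem (hI : BoolIdeal I) (h : IdealRel I a b) (ha : a ∈ I) : b ∈ I :=
  hI.mem_of_le (hI.sup_mem ha ((iff_sdiff_mem hI).1 h).2) le_sup_sdiff

theorem inf (hI : BoolIdeal I) (h : IdealRel I a b) (h' : IdealRel I a' b') :
    IdealRel I (a ⊓ a') (b ⊓ b') := by
  rw [iff_sdiff_mem hI] at h h' ⊢
  exact ⟨hI.mem_of_le (hI.sup_mem h.1 h'.1) inf_sdiff_inf_le_sup,
    hI.mem_of_le (hI.sup_mem h.2 h'.2) inf_sdiff_inf_le_sup⟩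

theorem sup (hI : BoolIdeal I) (h : IdealRel I a b) (h' : IdealRel I a' b') :
    IdealRel I (a ⊔ a') (b ⊔ b') := by
  rw [iff_sdiff_mem hI] at h h' ⊢
  exact ⟨hI.mem_of_le (hI.sup_mem h.1 h'.1) sup_sdiff_sup_le_sup,
    hI.mem_of_le (hI.sup_mem h.2 h'.2) sup_sdiff_sup_le_sup⟩

theorem sdiff (hI : BoolIdeal I) (h : IdealRel I a b) (h' : IdealRel I a' b') :
    IdealRel I (a \ a') (b \ b') := by
  rw [iff_sdiff_mem hI] at h h' ⊢
  exact ⟨hI.mem_of_le (hI.sup_mem h.1 h'.2) sdiff_sdiff_sdiff_le_sup,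
    hI.mem_of_le (hI.sup_mem h.2 h'.1) sdiff_sdiff_sdiff_le_sup⟩

end IdealRel

abbrev Function.Surjective.generalizedBooleanAlgebra {α β : Type*} [GeneralizedBooleanAlgebra α]
    [Max β] [Min β] [SDiff β] [Bot β] (f : α → β) (hf : Function.Surjective f)
    (map_sup : ∀ a b, f (a ⊔ b) = f a ⊔ f b) (map_inf : ∀ a b, f (a ⊓ b) = f a ⊓ f b)
    (map_sdiff : ∀ a b, f (a \ b) = f a \ f b) (map_bot : f ⊥ = ⊥) :
    GeneralizedBooleanAlgebra β :=
  letI : Lattice β := Lattice.mk'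
    (hf.forall₂.2 fun a b => by simp only [← map_sup, sup_comm])
    (hf.forall₃.2 fun a b c => by simp only [← map_sup, sup_assoc])
    (hf.forall₂.2 fun a b => by simp only [← map_inf, inf_comm])
    (hf.forall₃.2 fun a b c => by simp only [← map_inf, inf_assoc])
    (hf.forall₂.2 fun a b => by simp only [← map_sup, ← map_inf, sup_inf_self])
    (hf.forall₂.2 fun a b => by simp only [← map_sup, ← map_inf, inf_sup_self])
  { DistribLattice.ofInfSupLe <| hf.forall₃.2 fun a b c => by
      simp only [← map_sup, ← map_inf, inf_sup_left, le_refl] with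
    sup_inf_sdiff := hf.forall₂.2 fun a b => by
      simp only [← map_sup, ← map_inf, ← map_sdiff, sup_inf_sdiff]
    inf_inf_sdiff := hf.forall₂.2 fun a b => by
      simp only [← map_inf, ← map_sdiff, inf_inf_sdiff, map_bot] }

section BReg

variable {L : Type*} {θ : L → B → B}

theorem bot_mem_bReg : ⊥ ∈ BReg θ := fun _ hb hne => absurd (le_bot_iff.1 hb) hne

theorem mem_bReg_of_le (h : a ≤ b) (hb : b ∈ BReg θ) : a ∈ BReg θ :=
  fun c hc => hb c (hc.trans h)

theorem delta_bot (hθ : ∀ α, IsBoolAction (θ α)) : Delta θ ⊥ = ∅ := by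
  ext α
  simp [Delta, (hθ α).2.2.2]

theorem delta_sup (hθ : ∀ α, IsBoolAction (θ α)) (a b : B) :
    Delta θ (a ⊔ b) = Delta θ a ∪ Delta θ b := by
  ext α
  simp only [Delta, Set.mem_ofPred_eq, Set.mem_union, (hθ α).2.1, ne_eq, sup_eq_bot_iff,
    not_and_or]

theorem finite_delta_of_le_mem_bReg (hθ : ∀ α, IsBoolAction (θ α)) (h : a ≤ b)
    (hb : b ∈ BReg θ) : (Delta θ a).Finite := by
  rcases eq_or_ne a ⊥ with rfl | ha
  · simp [delta_bot hθ]
  · exact (hb a h ha).2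

theorem sup_mem_bReg (hθ : ∀ α, IsBoolAction (θ α)) (ha : a ∈ BReg θ) (hb : b ∈ BReg θ) :
    a ⊔ b ∈ BReg θ := by
  intro c hc hne
  have hca : c \ a ≤ b := sdiff_le_iff.2 hc
  have hdelta : Delta θ c = Delta θ (c ⊓ a) ∪ Delta θ (c \ a) := by
    rw [← delta_sup hθ, sup_inf_sdiff]
  refine ⟨?_, hdelta ▸ (finite_delta_of_le_mem_bReg hθ inf_le_right ha).union
    (finite_delta_of_le_mem_bReg hθ hca hb)⟩
  rw [hdelta]
  by_cases hinf : c ⊓ a = ⊥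
  · have hsdiff : c \ a ≠ ⊥ := fun h => hne (by rw [← sup_inf_sdiff c a, hinf, h, sup_idem])
    exact (hb _ hca hsdiff).1.mono Set.subset_union_right
  · exact (ha _ inf_le_right hinf).1.mono Set.subset_union_left

theorem boolIdeal_bReg (hθ : ∀ α, IsBoolAction (θ α)) : BoolIdeal (BReg θ) :=
  ⟨⟨⊥, bot_mem_bReg⟩, fun _ ha _ hb => sup_mem_bReg hθ ha hb,
    fun _ ha _ => mem_bReg_of_le inf_le_left ha⟩

end BReg

namespace PairCarrier

variable {L : Type*} {θ : L → B → B}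

def diag (a : B) : PairCarrier θ := ⟨(a, a), ⊥, bot_mem_bReg, rfl⟩

instance : Bot (PairCarrier θ) := ⟨diag ⊥⟩
instance : LE (PairCarrier θ) := ⟨fun p q => p.1 ≤ q.1⟩
instance : LT (PairCarrier θ) := ⟨fun p q => p.1 < q.1⟩

variable [Fact (∀ α, IsBoolAction (θ α))]

instance : Max (PairCarrier θ) :=
  ⟨fun p q => ⟨p.1 ⊔ q.1, IdealRel.sup (boolIdeal_bReg Fact.out) p.2 q.2⟩⟩
instance : Min (PairCarrier θ) :=
  ⟨fun p q => ⟨p.1 ⊓ q.1, IdealRel.inf (boolIdeal_bReg Fact.out) p.2 q.2⟩⟩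
instance : SDiff (PairCarrier θ) :=
  ⟨fun p q => ⟨p.1 \ q.1, IdealRel.sdiff (boolIdeal_bReg Fact.out) p.2 q.2⟩⟩

instance : GeneralizedBooleanAlgebra (PairCarrier θ) :=
  Function.Injective.generalizedBooleanAlgebra (fun p : PairCarrier θ => p.1) Subtype.val_injective
    Iff.rfl Iff.rfl (fun _ _ => rfl) (fun _ _ => rfl) rfl (fun _ _ => rfl)

end PairCarrier

open PairCarrier

/-- `𝓑̃`. A type synonym, so that its Boolean algebra structure does not meet Mathlib's
`Preorder` instance on quotients. -/
def BTilde {L : Type*} (θ : L → B → B) (J : Set B) (hJ : BoolIdeal J) : Type _ :=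
  Quotient (pairSetoid θ J hJ)

namespace BTilde

variable {L : Type*} {θ : L → B → B} {J : Set B} {hJ : BoolIdeal J} {p q : PairCarrier θ}

def mk (p : PairCarrier θ) : BTilde θ J hJ := Quotient.mk _ p

theorem mk_surjective : Function.Surjective (mk : PairCarrier θ → BTilde θ J hJ) :=
  Quotient.mk_surjective

theorem mk_eq_mk_iff :
    (mk p : BTilde θ J hJ) = mk q ↔ p.1.1 = q.1.1 ∧ IdealRel J p.1.2 q.1.2 :=
  Quotient.eq

theorem mk_eq_mk_of_val_eq (h : p.1 = q.1) : (mk p : BTilde θ J hJ) = mk q :=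
  congrArg mk (Subtype.ext h)

instance : Bot (BTilde θ J hJ) := ⟨mk ⊥⟩

theorem mk_eq_bot_iff : (mk p : BTilde θ J hJ) = ⊥ ↔ p.1.1 = ⊥ ∧ p.1.2 ∈ J :=
  mk_eq_mk_iff.trans (and_congr Iff.rfl (IdealRel.bot_iff hJ))

variable (θ J hJ) in
def theta (α : L) : BTilde θ J hJ → BTilde θ J hJ :=
  Quotient.lift (fun p => mk (diag (θ α p.1.1))) fun _ _ h =>
    congrArg (fun a => mk (diag (θ α a))) h.1

theorem theta_mk (α : L) (p : PairCarrier θ) :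
    theta θ J hJ α (mk p) = mk (diag (θ α p.1.1)) := rfl

variable [Fact (∀ α, IsBoolAction (θ α))]

instance : Max (BTilde θ J hJ) :=
  ⟨Quotient.map₂ (· ⊔ ·) fun _ _ h _ _ h' => ⟨congrArg₂ _ h.1 h'.1, IdealRel.sup hJ h.2 h'.2⟩⟩
instance : Min (BTilde θ J hJ) :=
  ⟨Quotient.map₂ (· ⊓ ·) fun _ _ h _ _ h' => ⟨congrArg₂ _ h.1 h'.1, IdealRel.inf hJ h.2 h'.2⟩⟩
instance : SDiff (BTilde θ J hJ) :=
  ⟨Quotient.map₂ (· \ ·) fun _ _ h _ _ h' => ⟨congrArg₂ _ h.1 h'.1, IdealRel.sdiff hJ h.2 h'.2⟩⟩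

theorem mk_inf (p q : PairCarrier θ) : (mk (p ⊓ q) : BTilde θ J hJ) = mk p ⊓ mk q := rfl

instance : GeneralizedBooleanAlgebra (BTilde θ J hJ) :=
  mk_surjective.generalizedBooleanAlgebra mk (fun _ _ => rfl) (fun _ _ => rfl) (fun _ _ => rfl) rfl

theorem mk_le_mk_iff : (mk p : BTilde θ J hJ) ≤ mk q ↔ p.1.1 ≤ q.1.1 ∧ p.1.2 \ q.1.2 ∈ J :=
  sdiff_eq_bot_iff.symm.trans (mk_eq_bot_iff.trans (and_congr sdiff_eq_bot_iff Iff.rfl))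

theorem delta_theta_mk (p : PairCarrier θ) : Delta (theta θ J hJ) (mk p) = Delta θ p.1.1 := by
  ext α
  simp only [Delta, Set.mem_ofPred_eq, theta_mk, ne_eq, mk_eq_bot_iff]
  exact not_congr ⟨And.left, fun h => ⟨h, h ▸ hJ.bot_mem⟩⟩

theorem isBoolAction_theta (α : L) : IsBoolAction (theta θ J hJ α) := by
  obtain ⟨hinf, hsup, hsdiff, hbot⟩ := (Fact.out : ∀ α, IsBoolAction (θ α)) α
  exact ⟨mk_surjective.forall₂.2 fun _ _ => congrArg (fun a => mk (diag a)) (hinf _ _),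
    mk_surjective.forall₂.2 fun _ _ => congrArg (fun a => mk (diag a)) (hsup _ _),
    mk_surjective.forall₂.2 fun _ _ => congrArg (fun a => mk (diag a)) (hsdiff _ _),
    congrArg (fun a => mk (diag a)) hbot⟩

theorem mk_mem_bReg_theta_iff :
    mk p ∈ BReg (theta θ J hJ) ↔ p.1.1 ∈ BReg θ ∧ p.1.2 ∈ J := by
  have hθ : ∀ α, IsBoolAction (θ α) := Fact.out
  constructor
  · intro hreg
    have hA : p.1.1 ∈ BReg θ := by
      intro b hb hne
      have hy : mk (diag b ⊓ p) ≠ (⊥ : BTilde θ J hJ) := by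
        rw [Ne, mk_eq_bot_iff]
        exact fun h => hne (inf_eq_left.2 hb ▸ h.1)
      have hd : Delta (theta θ J hJ) (mk (diag b ⊓ p)) = Delta θ b := by
        rw [delta_theta_mk]
        exact congrArg (Delta θ) (inf_eq_left.2 hb)
      exact hd ▸ hreg _ (by rw [mk_inf]; exact inf_le_right) hy
    refine ⟨hA, by_contra fun hC => ?_⟩
    let y : PairCarrier θ := ⟨(⊥, p.1.2), p.1.2, IdealRel.mem (boolIdeal_bReg hθ) p.2 hA, by simp⟩
    have hy : mk y ≤ (mk p : BTilde θ J hJ) := mk_le_mk_iff.2 ⟨bot_le, by simp [y, hJ.bot_mem]⟩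
    have := (hreg _ hy (by rw [Ne, mk_eq_bot_iff]; exact fun h => hC h.2)).1
    rw [delta_theta_mk, delta_bot hθ] at this
    exact Set.not_nonempty_empty this
  · rintro ⟨hA, hC⟩ y hy hne
    obtain ⟨r, rfl⟩ := mk_surjective y
    rw [mk_le_mk_iff] at hy
    rw [Ne, mk_eq_bot_iff, not_and] at hne
    have hr : r.1.1 ≠ ⊥ := fun h => hne h (hJ.mem_of_le (hJ.sup_mem hC hy.2) le_sup_sdiff)
    rw [delta_theta_mk]
    exact hA _ hy.1 hr

theorem bReg_theta : BReg (theta θ J hJ) =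
    {x | ∃ A ∈ BReg θ, ∃ q : PairCarrier θ, q.1 = (A, ⊥) ∧ x = mk q} := by
  ext x
  obtain ⟨p, rfl⟩ := mk_surjective x
  refine mk_mem_bReg_theta_iff.trans ⟨fun ⟨hA, hC⟩ => ?_, fun ⟨A, hA, q, hq, hpq⟩ => ?_⟩
  · exact ⟨p.1.1, hA, ⟨(p.1.1, ⊥), p.1.1, hA, by simp⟩, rfl,
      mk_eq_mk_iff.2 ⟨rfl, (IdealRel.bot_iff hJ).2 hC⟩⟩
  · obtain ⟨h1, h2⟩ := mk_eq_mk_iff.1 hpq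
    rw [hq] at h1 h2
    exact ⟨h1 ▸ hA, (IdealRel.bot_iff hJ).1 h2⟩

end BTilde

end

theorem tilde_boolean_dynamical_system_general {B L : Type*} [GeneralizedBooleanAlgebra B]
    (θ : L → B → B) (hθ : ∀ α, IsBoolAction (θ α))
    (J : Set B) (hJ : BoolIdeal J) :
    ∃ (inf' sup' sdiff' : Quotient (pairSetoid θ J hJ) → Quotient (pairSetoid θ J hJ) →
        Quotient (pairSetoid θ J hJ)) (bot' : Quotient (pairSetoid θ J hJ))
      (θq : L → Quotient (pairSetoid θ J hJ) → Quotient (pairSetoid θ J hJ)),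
      -- the operations are given componentwise on representatives
      (∀ q q' r : PairCarrier θ, r.1 = (q.1.1 ⊓ q'.1.1, q.1.2 ⊓ q'.1.2) →
        inf' (Quotient.mk _ q) (Quotient.mk _ q') = Quotient.mk _ r) ∧
      (∀ q q' r : PairCarrier θ, r.1 = (q.1.1 ⊔ q'.1.1, q.1.2 ⊔ q'.1.2) →
        sup' (Quotient.mk _ q) (Quotient.mk _ q') = Quotient.mk _ r) ∧
      (∀ q q' r : PairCarrier θ, r.1 = (q.1.1 \ q'.1.1, q.1.2 \ q'.1.2) →
        sdiff' (Quotient.mk _ q) (Quotient.mk _ q') = Quotient.mk _ r) ∧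
      (∀ r : PairCarrier θ, r.1 = ((⊥ : B), (⊥ : B)) → bot' = Quotient.mk _ r) ∧
      -- 𝓑̃ is a generalized Boolean algebra: distributive lattice axioms,
      (∀ x y, sup' x y = sup' y x) ∧
      (∀ x y z, sup' (sup' x y) z = sup' x (sup' y z)) ∧
      (∀ x y, inf' x y = inf' y x) ∧
      (∀ x y z, inf' (inf' x y) z = inf' x (inf' y z)) ∧
      (∀ x y, sup' x (inf' x y) = x) ∧
      (∀ x y, inf' x (sup' x y) = x) ∧
      (∀ x y z, inf' x (sup' y z) = sup' (inf' x y) (inf' x z)) ∧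
      (∀ x, inf' x bot' = bot') ∧
      (∀ x y, sup' (inf' x y) (sdiff' x y) = x) ∧
      (∀ x y, inf' (inf' x y) (sdiff' x y) = bot') ∧
      -- θ̃_α(A,[B]) = (θ_α(A),[θ_α(A)]),
      (∀ (α : L) (q r : PairCarrier θ), r.1 = (θ α q.1.1, θ α q.1.1) →
        θq α (Quotient.mk _ q) = Quotient.mk _ r) ∧
      -- each θ̃_α is an action, so (𝓑̃,𝓛,θ̃) is a Boolean dynamical system,
      (∀ (α : L) (x y), θq α (inf' x y) = inf' (θq α x) (θq α y)) ∧
      (∀ (α : L) (x y), θq α (sup' x y) = sup' (θq α x) (θq α y)) ∧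
      (∀ (α : L) (x y), θq α (sdiff' x y) = sdiff' (θq α x) (θq α y)) ∧
      (∀ α : L, θq α bot' = bot') ∧
      -- and the regular elements of (𝓑̃,𝓛,θ̃) are exactly {(A,[∅]) : A ∈ 𝓑_reg}.
      ({x : Quotient (pairSetoid θ J hJ) |
          ∀ y, inf' y x = y → y ≠ bot' →
            ({α : L | θq α y ≠ bot'}.Nonempty ∧ {α : L | θq α y ≠ bot'}.Finite)} =
        {x | ∃ A ∈ BReg θ, ∃ q : PairCarrier θ, q.1 = (A, (⊥ : B)) ∧
          x = Quotient.mk _ q}) := by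
  have : Fact (∀ α, IsBoolAction (θ α)) := ⟨hθ⟩
  refine ⟨(· ⊓ · : BTilde θ J hJ → _ → _), (· ⊔ · : BTilde θ J hJ → _ → _),
    (· \ · : BTilde θ J hJ → _ → _), (⊥ : BTilde θ J hJ), BTilde.theta θ J hJ,
    fun _ _ _ h => BTilde.mk_eq_mk_of_val_eq h.symm,
    fun _ _ _ h => BTilde.mk_eq_mk_of_val_eq h.symm,
    fun _ _ _ h => BTilde.mk_eq_mk_of_val_eq h.symm,
    fun _ h => BTilde.mk_eq_mk_of_val_eq h.symm,
    fun x y : BTilde θ J hJ => sup_comm x y, fun x y z : BTilde θ J hJ => sup_assoc x y z,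
    fun x y : BTilde θ J hJ => inf_comm x y, fun x y z : BTilde θ J hJ => inf_assoc x y z,
    fun x y : BTilde θ J hJ => sup_inf_self (a := x) (b := y),
    fun x y : BTilde θ J hJ => inf_sup_self (a := x) (b := y),
    fun x y z : BTilde θ J hJ => inf_sup_left x y z, fun x : BTilde θ J hJ => inf_bot_eq x,
    fun x y : BTilde θ J hJ => sup_inf_sdiff x y, fun x y : BTilde θ J hJ => inf_inf_sdiff x y,
    fun _ _ _ h => BTilde.mk_eq_mk_of_val_eq h.symm,
    fun α => (BTilde.isBoolAction_theta α).1, fun α => (BTilde.isBoolAction_theta α).2.1,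
    fun α => (BTilde.isBoolAction_theta α).2.2.1, fun α => (BTilde.isBoolAction_theta α).2.2.2,
    ?_⟩
  refine Eq.trans ?_ BTilde.bReg_theta
  exact Set.ext fun x : BTilde θ J hJ =>
    forall_congr' fun y => imp_congr_left (inf_eq_left (b := x))

/-- Given a relative generalized Boolean dynamical system (𝓑,𝓛,θ,𝓘_α;𝓙),
the set 𝓑̃ = {(A,[B]_𝓙) : [A]_{𝓑_reg} = [B]_{𝓑_reg}} with componentwise operations and
bottom (∅,[∅]) is a generalized Boolean algebra, θ̃_α(A,[B]) = (θ_α(A),[θ_α(A)]) makes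
(𝓑̃,𝓛,θ̃) a Boolean dynamical system, and its regular elements are exactly
𝓑̃_reg = {(A,[∅]) : A ∈ 𝓑_reg}. -/
theorem tilde_boolean_dynamical_system {B L : Type*} [GeneralizedBooleanAlgebra B]
    (θ : L → B → B) (hθ : ∀ α, IsBoolAction (θ α))
    (J : Set B) (hJ : BoolIdeal J) (hJreg : J ⊆ BReg θ) :
    ∃ (inf' sup' sdiff' : Quotient (pairSetoid θ J hJ) → Quotient (pairSetoid θ J hJ) →
        Quotient (pairSetoid θ J hJ)) (bot' : Quotient (pairSetoid θ J hJ))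
      (θq : L → Quotient (pairSetoid θ J hJ) → Quotient (pairSetoid θ J hJ)),
      -- the operations are given componentwise on representatives
      (∀ q q' r : PairCarrier θ, r.1 = (q.1.1 ⊓ q'.1.1, q.1.2 ⊓ q'.1.2) →
        inf' (Quotient.mk _ q) (Quotient.mk _ q') = Quotient.mk _ r) ∧
      (∀ q q' r : PairCarrier θ, r.1 = (q.1.1 ⊔ q'.1.1, q.1.2 ⊔ q'.1.2) →
        sup' (Quotient.mk _ q) (Quotient.mk _ q') = Quotient.mk _ r) ∧
      (∀ q q' r : PairCarrier θ, r.1 = (q.1.1 \ q'.1.1, q.1.2 \ q'.1.2) →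
        sdiff' (Quotient.mk _ q) (Quotient.mk _ q') = Quotient.mk _ r) ∧
      (∀ r : PairCarrier θ, r.1 = ((⊥ : B), (⊥ : B)) → bot' = Quotient.mk _ r) ∧
      -- 𝓑̃ is a generalized Boolean algebra: distributive lattice axioms,
      (∀ x y, sup' x y = sup' y x) ∧
      (∀ x y z, sup' (sup' x y) z = sup' x (sup' y z)) ∧
      (∀ x y, inf' x y = inf' y x) ∧
      (∀ x y z, inf' (inf' x y) z = inf' x (inf' y z)) ∧
      (∀ x y, sup' x (inf' x y) = x) ∧
      (∀ x y, inf' x (sup' x y) = x) ∧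
      (∀ x y z, inf' x (sup' y z) = sup' (inf' x y) (inf' x z)) ∧
      (∀ x, inf' x bot' = bot') ∧
      (∀ x y, sup' (inf' x y) (sdiff' x y) = x) ∧
      (∀ x y, inf' (inf' x y) (sdiff' x y) = bot') ∧
      -- θ̃_α(A,[B]) = (θ_α(A),[θ_α(A)]),
      (∀ (α : L) (q r : PairCarrier θ), r.1 = (θ α q.1.1, θ α q.1.1) →
        θq α (Quotient.mk _ q) = Quotient.mk _ r) ∧
      -- each θ̃_α is an action, so (𝓑̃,𝓛,θ̃) is a Boolean dynamical system,
      (∀ (α : L) (x y), θq α (inf' x y) = inf' (θq α x) (θq α y)) ∧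
      (∀ (α : L) (x y), θq α (sup' x y) = sup' (θq α x) (θq α y)) ∧
      (∀ (α : L) (x y), θq α (sdiff' x y) = sdiff' (θq α x) (θq α y)) ∧
      (∀ α : L, θq α bot' = bot') ∧
      -- and the regular elements of (𝓑̃,𝓛,θ̃) are exactly {(A,[∅]) : A ∈ 𝓑_reg}.
      ({x : Quotient (pairSetoid θ J hJ) |
          ∀ y, inf' y x = y → y ≠ bot' →
            ({α : L | θq α y ≠ bot'}.Nonempty ∧ {α : L | θq α y ≠ bot'}.Finite)} =
        {x | ∃ A ∈ BReg θ, ∃ q : PairCarrier θ, q.1 = (A, (⊥ : B)) ∧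
          x = Quotient.mk _ q}) :=
  tilde_boolean_dynamical_system_general θ hθ J hJ
end

section
/- Let I be an ideal of C*(𝓑,𝓛,θ,𝓘_α;𝓙) = C*(p_A, s_{α,B}). Then 𝓗_I := {A ∈ 𝓑 : p_A ∈ I} is a hereditary and 𝓙-saturated ideal of the Boolean algebra 𝓑. -/
open scoped BigOperators

/-- A (closed, two-sided) ideal of a C*-algebra. -/
def CstarIdeal {X : Type*} [NonUnitalCStarAlgebra X] (I : Set X) : Prop :=
  IsClosed I ∧ (0 : X) ∈ I ∧ (∀ a ∈ I, ∀ b ∈ I, a + b ∈ I) ∧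
    (∀ a ∈ I, ∀ c : ℂ, c • a ∈ I) ∧ (∀ a ∈ I, ∀ x : X, x * a ∈ I ∧ a * x ∈ I)

/-- In a C*-algebra, if `star a * a` is a projection `q`, then `a * q = a`. -/
lemma proj_absorb_aux {X : Type*} [NonUnitalCStarAlgebra X] (a q : X) (hq : star a * a = q)
    (hq2 : q * q = q) (hqs : star q = q) : a * q = a := by
  have key : star (a * q - a) * (a * q - a) = 0 := by
    have hst : star (a * q - a) = q * star a - star a := by
      rw [star_sub, star_mul, hqs]
    rw [hst]
    have expand : (q * star a - star a) * (a * q - a)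
        = q * (star a * a) * q - q * (star a * a) - (star a * a) * q + star a * a := by
      noncomm_ring
    rw [expand, hq]
    simp only [hq2, mul_assoc, hq2]
    simp [hq2]
  have hn : ‖a * q - a‖ = 0 := by
    have h := CStarRing.norm_star_mul_self (x := a * q - a)
    rw [key, norm_zero] at h
    exact mul_self_eq_zero.mp h.symm
  exact sub_eq_zero.mp (norm_eq_zero.mp hn)

/-- If I is an ideal of the C*-algebra generated by a
(𝓑,𝓛,θ,𝓘_α;𝓙)-representation {p_A, s_{α,B}}, then 𝓗_I := {A ∈ 𝓑 : p_A ∈ I} is a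
hereditary and 𝓙-saturated ideal of the Boolean algebra 𝓑. -/
theorem HI_hereditary_saturated_ideal {B L X : Type*} [GeneralizedBooleanAlgebra B]
    [DecidableEq L] [NonUnitalCStarAlgebra X]
    (θ : L → B → B) (hθ : ∀ α, IsBoolAction (θ α))
    (I : L → Set B) (hI : ∀ α, BoolIdeal (I α)) (hRI : ∀ (α : L) (A : B), θ α A ∈ I α)
    (J : Set B) (hJ : BoolIdeal J) (hJreg : J ⊆ BReg θ)
    (P : B → X) (S : L → B → X) (hrep : IsRepresentation θ I J P S)
    (Idl : Set X) (hIdl : CstarIdeal Idl) :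
    -- 𝓗_I is an ideal of 𝓑,
    BoolIdeal {A : B | P A ∈ Idl} ∧
    -- 𝓗_I is hereditary,
    (∀ A, P A ∈ Idl → ∀ α : L, P (θ α A) ∈ Idl) ∧
    -- and 𝓗_I is 𝓙-saturated.
    (∀ A ∈ J, (∀ α ∈ Delta θ A, P (θ α A) ∈ Idl) → P A ∈ Idl) := by
  classical
  obtain ⟨hPstar, hP0, hPinf, hPsup, hPS, hSS, hJsum⟩ := hrep
  obtain ⟨_, h0, hadd, hsmul, hmul⟩ := hIdl
  -- P C is a projection and S absorbs it
  have hSSt : ∀ (α : L) (C : B), C ∈ I α → star (S α C) * S α C = P C := by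
    intro α C hC
    have := hSS α α C hC C hC
    simpa [inf_idem] using this
  have hPproj : ∀ C : B, P C * P C = P C := fun C => by rw [← hPinf, inf_idem]
  have habsorb : ∀ (α : L) (C : B), C ∈ I α → S α C * P C = S α C := by
    intro α C hC
    exact proj_absorb_aux (S α C) (P C) (hSSt α C hC) (hPproj C) (hPstar C)
  -- closure under intersection
  have hinf : ∀ a : B, P a ∈ Idl → ∀ b : B, P (a ⊓ b) ∈ Idl := by
    intro a ha b
    rw [hPinf]
    exact (hmul _ ha (P b)).2
  refine ⟨⟨⟨⊥, by simpa [hP0] using h0⟩, ?_, fun a ha b => hinf a ha b⟩, ?_, ?_⟩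
  · -- closure under union
    intro a ha b hb
    have h1 : P a + P b ∈ Idl := hadd _ ha _ hb
    have h2 : -(P (a ⊓ b)) ∈ Idl := by
      simpa [neg_one_smul] using hsmul _ (hinf a ha b) (-1 : ℂ)
    have h3 : P a + P b - P (a ⊓ b) ∈ Idl := by
      simpa [sub_eq_add_neg] using hadd _ h1 _ h2
    show P (a ⊔ b) ∈ Idl
    rw [hPsup]
    exact h3
  · -- hereditary
    intro A hA α
    set C := θ α A with hCdef
    have hC : C ∈ I α := hRI α A
    have hmem : star (S α C) * (P A * S α C) ∈ Idl :=
      (hmul _ ((hmul _ hA (S α C)).2) (star (S α C))).1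
    have heq : star (S α C) * (P A * S α C) = P C := by
      rw [hPS A α C hC, ← hCdef, ← mul_assoc, hSSt α C hC, hPproj]
    rwa [heq] at hmem
  · -- J-saturated
    intro A hA hall
    by_cases hbot : A = ⊥
    · rw [hbot, hP0]; exact h0
    · obtain ⟨-, hfin⟩ := hJreg hA A le_rfl hbot
      have hF : (hfin.toFinset : Set L) = Delta θ A := hfin.coe_toFinset
      rw [hJsum A hA hfin.toFinset hF]
      refine Finset.sum_induction _ (· ∈ Idl) (fun a b ha hb => hadd a ha b hb) h0 ?_
      intro α hα
      have hαΔ : α ∈ Delta θ A := hF ▸ hα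
      have hC : θ α A ∈ I α := hRI α A
      have hPC : P (θ α A) ∈ Idl := hall α hαΔ
      have : S α (θ α A) * star (S α (θ α A))
          = S α (θ α A) * (P (θ α A) * star (S α (θ α A))) := by
        rw [← mul_assoc, habsorb α _ hC]
      rw [this]
      exact (hmul _ ((hmul _ hPC (star (S α (θ α A)))).2) (S α (θ α A))).1
end

section
/- Let I be an ideal of C*(𝓑,𝓛,θ,𝓘_α;𝓙), let 𝓗_I = {A : p_A ∈ I}, and let 𝓑_{𝓗_I} = {A ∈ 𝓑 : [A] ∈ (𝓑/𝓗_I)_reg}. Then 𝓢_I := {A ∈ 𝓑_{𝓗_I} : p_A − Σ_{α ∈ Δ_{[A]}} s_{α,θ_α(A)} s_{α,θ_α(A)}^* ∈ I} is an ideal of 𝓑_{𝓗_I} containing both 𝓗_I and 𝓙. (In particular, one uses the decomposition p_{A,𝓗} = Σ_{α ∈ Δ_{[A\B]}} s_{α,θ_α(A\B)}s_{α,θ_α(A\B)}^* + Σ_{α ∈ Δ_{[A∩B]}} s_{α,θ_α(A∩B)}s_{α,θ_α(A∩B)}^* to prove closure under unions.) -/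
open scoped BigOperators

/-- Δ_{[A]} = {α : [θ_α(A)] ≠ [∅]} = {α : θ_α(A) ∉ 𝓗}, computed in the quotient 𝓑/𝓗. -/
def DeltaQ {B L : Type*} [GeneralizedBooleanAlgebra B] (θ : L → B → B) (H : Set B)
    (A : B) : Set L :=
  {α | θ α A ∉ H}

/-- A ∈ 𝓑_𝓗, i.e. the class [A] is regular in the quotient Boolean dynamical system
(𝓑/𝓗, 𝓛, θ): every class [b] ≤ [A] (i.e. b ⊆ A ∪ W for some W ∈ 𝓗) with [b] ≠ [∅]
(i.e. b ∉ 𝓗) satisfies 0 < λ_{[b]} < ∞. -/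
def QuotRegular {B L : Type*} [GeneralizedBooleanAlgebra B] (θ : L → B → B) (H : Set B)
    (A : B) : Prop :=
  ∀ b : B, (∃ W ∈ H, b ≤ A ⊔ W) → b ∉ H → (DeltaQ θ H b).Nonempty ∧ (DeltaQ θ H b).Finite

section Aux

variable {B L X : Type*} [GeneralizedBooleanAlgebra B] [DecidableEq L] [NonUnitalCStarAlgebra X]
variable {θ : L → B → B} {I : L → Set B} {J : Set B} {P : B → X} {S : L → B → X}

lemma aux_ssP (hrep : IsRepresentation θ I J P S) {α : L} {C C' : B}
    (hC : C ∈ I α) (hC' : C' ∈ I α) : star (S α C) * S α C' = P (C ⊓ C') := by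
  rw [hrep.2.2.2.2.2.1 α α C hC C' hC', if_pos rfl]

lemma aux_PP (hrep : IsRepresentation θ I J P S) (A A' : B) :
    P A * P A' = P (A ⊓ A') := (hrep.2.2.1 A A').symm

lemma aux_SP (hrep : IsRepresentation θ I J P S) (hI : ∀ α, BoolIdeal (I α))
    {α : L} {C C' : B} (hC : C ∈ I α) (hC' : C' ∈ I α) :
    S α C * P C' = S α (C ⊓ C') := by
  have hCC' : C ⊓ C' ∈ I α := (hI α).2.2 C hC C'
  have hPs := hrep.1
  have key : star (S α C * P C' - S α (C ⊓ C')) * (S α C * P C' - S α (C ⊓ C')) = 0 := by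
    rw [star_sub, star_mul, hPs, sub_mul, mul_sub, mul_sub]
    have A1 : P C' * star (S α C) * (S α C * P C') = P (C ⊓ C') := by
      rw [mul_assoc (P C'), ← mul_assoc (star (S α C)), aux_ssP hrep hC hC, inf_idem,
        ← mul_assoc, aux_PP hrep C' C, aux_PP hrep (C' ⊓ C) C']
      congr 1
      simp [inf_comm, inf_left_comm, inf_assoc]
    have A2 : P C' * star (S α C) * S α (C ⊓ C') = P (C ⊓ C') := by
      rw [mul_assoc, aux_ssP hrep hC hCC', aux_PP hrep C' (C ⊓ (C ⊓ C'))]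
      congr 1
      simp [inf_comm, inf_left_comm, inf_assoc]
    have A3 : star (S α (C ⊓ C')) * (S α C * P C') = P (C ⊓ C') := by
      rw [← mul_assoc, aux_ssP hrep hCC' hC, aux_PP hrep (C ⊓ C' ⊓ C) C']
      congr 1
      simp [inf_comm, inf_left_comm, inf_assoc]
    have A4 : star (S α (C ⊓ C')) * S α (C ⊓ C') = P (C ⊓ C') := by
      rw [aux_ssP hrep hCC' hCC', inf_idem]
    rw [A1, A2, A3, A4]; simp
  exact sub_eq_zero.mp ((CStarRing.star_mul_self_eq_zero_iff _).mp key)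

lemma aux_Szero (hrep : IsRepresentation θ I J P S) (hI : ∀ α, BoolIdeal (I α)) {α : L} {C C' : B}
    (hC : C ∈ I α) (hC' : C' ∈ I α) (hdisj : C ⊓ C' = ⊥) :
    S α C * star (S α C') = 0 := by
  have h1 : S α C = S α C * P C := by rw [aux_SP hrep hI hC hC, inf_idem]
  have h2 : star (S α C') = P C' * star (S α C') := by
    nth_rewrite 1 [show S α C' = S α C' * P C' by rw [aux_SP hrep hI hC' hC', inf_idem]]
    rw [star_mul, hrep.1]
  calc S α C * star (S α C') = S α C * P C * (P C' * star (S α C')) := by rw [← h1, ← h2]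
    _ = S α C * (P C * P C') * star (S α C') := by simp only [mul_assoc]
    _ = 0 := by rw [aux_PP hrep C C', hdisj, hrep.2.1, mul_zero, zero_mul]

lemma aux_Sadd (hrep : IsRepresentation θ I J P S) (hI : ∀ α, BoolIdeal (I α)) {α : L} {C C' : B}
    (hC : C ∈ I α) (hC' : C' ∈ I α) (hdisj : C ⊓ C' = ⊥) :
    S α (C ⊔ C') = S α C + S α C' := by
  have hCC' : C ⊔ C' ∈ I α := (hI α).2.1 C hC C' hC'
  have i1 : (C ⊔ C') ⊓ C = C := inf_eq_right.mpr le_sup_left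
  have i2 : (C ⊔ C') ⊓ C' = C' := inf_eq_right.mpr le_sup_right
  have i1' : C ⊓ (C ⊔ C') = C := inf_eq_left.mpr le_sup_left
  have i2' : C' ⊓ (C ⊔ C') = C' := inf_eq_left.mpr le_sup_right
  have B00 : star (S α (C ⊔ C')) * S α (C ⊔ C') = P C + P C' := by
    rw [aux_ssP hrep hCC' hCC', inf_idem, hrep.2.2.2.1, hdisj, hrep.2.1, sub_zero]
  have key : star (S α (C ⊔ C') - (S α C + S α C')) * (S α (C ⊔ C') - (S α C + S α C')) = 0 := by
    rw [star_sub, star_add, sub_mul, mul_sub, mul_sub, add_mul, add_mul, mul_add, mul_add,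
      mul_add, B00, aux_ssP hrep hCC' hC, aux_ssP hrep hCC' hC', aux_ssP hrep hC hCC',
      aux_ssP hrep hC hC, aux_ssP hrep hC hC', aux_ssP hrep hC' hCC', aux_ssP hrep hC' hC,
      aux_ssP hrep hC' hC', i1, i2, i1', i2', inf_idem, inf_idem, hdisj, inf_comm C' C, hdisj,
      hrep.2.1]
    abel
  have := sub_eq_zero.mp ((CStarRing.star_mul_self_eq_zero_iff _).mp key)
  exact this

lemma aux_PbS (hrep : IsRepresentation θ I J P S) (hI : ∀ α, BoolIdeal (I α))
    (hθ : ∀ α, IsBoolAction (θ α)) (hRI : ∀ (α : L) (A : B), θ α A ∈ I α)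
    (a b : B) (α : L) : P b * S α (θ α a) = S α (θ α (a ⊓ b)) := by
  rw [hrep.2.2.2.2.1 b α (θ α a) (hRI α a), aux_SP hrep hI (hRI α a) (hRI α b), ← (hθ α).1]

lemma aux_PeP (hrep : IsRepresentation θ I J P S) (hI : ∀ α, BoolIdeal (I α))
    (hθ : ∀ α, IsBoolAction (θ α)) (hRI : ∀ (α : L) (A : B), θ α A ∈ I α)
    (a b : B) (α : L) :
    P b * (S α (θ α a) * star (S α (θ α a))) * P b
      = S α (θ α (a ⊓ b)) * star (S α (θ α (a ⊓ b))) := by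
  have h1 := aux_PbS hrep hI hθ hRI a b α
  calc P b * (S α (θ α a) * star (S α (θ α a))) * P b
      = (P b * S α (θ α a)) * star (P b * S α (θ α a)) := by
        rw [star_mul, hrep.1]; simp only [mul_assoc]
    _ = S α (θ α (a ⊓ b)) * star (S α (θ α (a ⊓ b))) := by rw [h1]

lemma aux_PPP (hrep : IsRepresentation θ I J P S) (a b : B) :
    P b * P a * P b = P (a ⊓ b) := by
  rw [aux_PP hrep b a, aux_PP hrep (b ⊓ a) b]
  congr 1
  simp [inf_comm, inf_left_comm, inf_assoc]

lemma aux_cut (hrep : IsRepresentation θ I J P S) (hI : ∀ α, BoolIdeal (I α))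
    (hθ : ∀ α, IsBoolAction (θ α)) (hRI : ∀ (α : L) (A : B), θ α A ∈ I α)
    (a b : B) (F : Finset L) :
    P b * (P a - ∑ α ∈ F, S α (θ α a) * star (S α (θ α a))) * P b
      = P (a ⊓ b) - ∑ α ∈ F, S α (θ α (a ⊓ b)) * star (S α (θ α (a ⊓ b))) := by
  rw [mul_sub, sub_mul, Finset.mul_sum, Finset.sum_mul, aux_PPP hrep a b]
  congr 1
  exact Finset.sum_congr rfl fun α _ => aux_PeP hrep hI hθ hRI a b α

end Aux

/-- Let I be an ideal of the C*-algebra generated by a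
(𝓑,𝓛,θ,𝓘_α;𝓙)-representation {p_A, s_{α,B}}, 𝓗_I = {A : p_A ∈ I}, and
𝓑_{𝓗_I} = {A : [A] ∈ (𝓑/𝓗_I)_reg}. Then
𝓢_I = {A ∈ 𝓑_{𝓗_I} : p_A − Σ_{α∈Δ_{[A]}} s_{α,θ_α(A)} s_{α,θ_α(A)}* ∈ I}
is an ideal of 𝓑_{𝓗_I} (hence of 𝓑) containing both 𝓗_I and 𝓙. -/
theorem SI_ideal_contains_HI_and_J {B L X : Type*} [GeneralizedBooleanAlgebra B]
    [DecidableEq L] [NonUnitalCStarAlgebra X]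
    (θ : L → B → B) (hθ : ∀ α, IsBoolAction (θ α))
    (I : L → Set B) (hI : ∀ α, BoolIdeal (I α)) (hRI : ∀ (α : L) (A : B), θ α A ∈ I α)
    (J : Set B) (hJ : BoolIdeal J) (hJreg : J ⊆ BReg θ)
    (P : B → X) (S : L → B → X) (hrep : IsRepresentation θ I J P S)
    (Idl : Set X) (hIdl : CstarIdeal Idl)
    -- 𝓗_I, 𝓑_{𝓗_I} and 𝓢_I:
    (H BH SI : Set B)
    (hH : H = {A : B | P A ∈ Idl})
    (hBH : BH = {A : B | QuotRegular θ H A})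
    (hSI : SI = {A ∈ BH | ∀ F : Finset L, ↑F = DeltaQ θ H A →
      P A - ∑ α ∈ F, S α (θ α A) * star (S α (θ α A)) ∈ Idl}) :
    -- 𝓢_I is an ideal of 𝓑_{𝓗_I}:
    SI ⊆ BH ∧
    (∀ a ∈ SI, ∀ b ∈ SI, a ⊔ b ∈ SI) ∧
    (∀ a ∈ SI, ∀ b ∈ BH, a ⊓ b ∈ SI) ∧
    -- hence an ideal of 𝓑:
    (∀ a ∈ SI, ∀ b : B, a ⊓ b ∈ SI) ∧
    -- containing both 𝓗_I and 𝓙: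
    H ⊆ SI ∧ J ⊆ SI := by
  classical
  obtain ⟨hclosed, h0, hadd, hsmul, habs⟩ := hIdl
  -- basic ideal facts
  have hNeg : ∀ a ∈ Idl, -a ∈ Idl := fun a ha => by
    simpa using hsmul a ha (-1)
  have hSub : ∀ a ∈ Idl, ∀ b ∈ Idl, a - b ∈ Idl := fun a ha b hb => by
    rw [sub_eq_add_neg]; exact hadd a ha _ (hNeg b hb)
  have hSum : ∀ (F : Finset L) (f : L → X), (∀ α ∈ F, f α ∈ Idl) → (∑ α ∈ F, f α) ∈ Idl :=
    fun F f hf => Finset.sum_induction f (· ∈ Idl) (fun a b ha hb => hadd a ha b hb) h0 hf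
  have hθmono : ∀ (α : L) {A A' : B}, A ≤ A' → θ α A ≤ θ α A' := by
    intro α A A' h
    have h2 : θ α (A ⊓ A') = θ α A := by rw [inf_eq_left.mpr h]
    rw [(hθ α).1] at h2
    exact inf_eq_left.mp h2
  -- membership in H
  have hHmem : ∀ {A : B}, A ∈ H ↔ P A ∈ Idl := by intro A; rw [hH]; exact Iff.rfl
  have hHbot : (⊥ : B) ∈ H := hHmem.mpr (by rw [hrep.2.1]; exact h0)
  have hHdown : ∀ {A A' : B}, A ∈ H → A' ≤ A → A' ∈ H := by
    intro A A' hA h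
    have h2 : P A' * P A ∈ Idl := (habs (P A) (hHmem.mp hA) (P A')).1
    rw [aux_PP hrep, inf_eq_left.mpr h] at h2
    exact hHmem.mpr h2
  have hHsup : ∀ {A A' : B}, A ∈ H → A' ∈ H → A ⊔ A' ∈ H := by
    intro A A' hA hA'
    refine hHmem.mpr ?_
    rw [hrep.2.2.2.1]
    refine hSub _ (hadd _ (hHmem.mp hA) _ (hHmem.mp hA')) _ ?_
    rw [hrep.2.2.1]
    exact (habs _ (hHmem.mp hA') _).1
  have hHθ : ∀ (α : L) (A : B), A ∈ H → θ α A ∈ H := by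
    intro α A hA
    have hs : P A * S α (θ α A) = S α (θ α A) := by
      rw [hrep.2.2.2.2.1 A α (θ α A) (hRI α A), aux_SP hrep hI (hRI α A) (hRI α A), inf_idem]
    have hS : S α (θ α A) ∈ Idl := by
      rw [← hs]; exact (habs _ (hHmem.mp hA) _).2
    have h2 : star (S α (θ α A)) * S α (θ α A) ∈ Idl := (habs _ hS _).1
    rw [aux_ssP hrep (hRI α A) (hRI α A), inf_idem] at h2
    exact hHmem.mpr h2
  have heIdl : ∀ (α : L) (C : B), C ∈ I α → C ∈ H → S α C * star (S α C) ∈ Idl := by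
    intro α C hC hCH
    have h1 : S α C * star (S α C) = S α C * (P C * star (S α C)) := by
      nth_rewrite 1 [show S α C = S α C * P C by rw [aux_SP hrep hI hC hC, inf_idem]]
      simp only [mul_assoc]
    rw [h1]
    exact (habs _ ((habs _ (hHmem.mp hCH) _).2) _).1
  -- membership in BH / SI
  have hBHmem : ∀ {A : B}, A ∈ BH ↔ QuotRegular θ H A := by intro A; rw [hBH]; exact Iff.rfl
  have hSImem : ∀ {A : B}, A ∈ SI ↔ A ∈ BH ∧ (∀ F : Finset L, ↑F = DeltaQ θ H A →
      P A - ∑ α ∈ F, S α (θ α A) * star (S α (θ α A)) ∈ Idl) := by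
    intro A; rw [hSI]; exact Iff.rfl
  have hDQmem : ∀ {α : L} {A : B}, α ∈ DeltaQ θ H A ↔ θ α A ∉ H := fun {α A} => Iff.rfl
  have hBHdown : ∀ {a b : B}, a ∈ BH → b ≤ a → b ∈ BH := by
    intro a b ha h
    refine hBHmem.mpr ?_
    rintro c ⟨W, hW, hc⟩ hcH
    exact (hBHmem.mp ha) c ⟨W, hW, hc.trans (sup_le_sup_right h W)⟩ hcH
  -- Goal 4: intersection with arbitrary elements
  have goal4 : ∀ a ∈ SI, ∀ b : B, a ⊓ b ∈ SI := by
    intro a ha b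
    obtain ⟨haBH, ha2⟩ := hSImem.mp ha
    refine hSImem.mpr ⟨hBHdown haBH inf_le_left, ?_⟩
    intro F' hF'
    by_cases haH : a ∈ H
    · have h1 : a ⊓ b ∈ H := hHdown haH inf_le_left
      have hDQ : DeltaQ θ H (a ⊓ b) = ∅ :=
        Set.eq_empty_iff_forall_notMem.mpr fun α h => h (hHθ α _ h1)
      have hF'e : F' = ∅ := Finset.coe_eq_empty.mp (by rw [hF', hDQ])
      rw [hF'e, Finset.sum_empty, sub_zero]
      exact hHmem.mp h1
    · obtain ⟨-, hfin⟩ := (hBHmem.mp haBH) a ⟨⊥, hHbot, le_sup_left⟩ haH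
      have hFco : ↑hfin.toFinset = DeltaQ θ H a := Set.Finite.coe_toFinset hfin
      have hD := ha2 hfin.toFinset hFco
      have hmem : P (a ⊓ b) - ∑ α ∈ hfin.toFinset,
          S α (θ α (a ⊓ b)) * star (S α (θ α (a ⊓ b))) ∈ Idl := by
        rw [← aux_cut hrep hI hθ hRI a b hfin.toFinset]
        exact (habs _ ((habs _ hD _).1) _).2
      have hsub : F' ⊆ hfin.toFinset := by
        intro α hα
        have h1 : α ∈ DeltaQ θ H (a ⊓ b) := hF' ▸ (Finset.mem_coe.mpr hα)
        have h2 : θ α a ∉ H := fun h => h1 (hHdown h (hθmono α inf_le_left))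
        rw [Set.Finite.mem_toFinset]
        exact h2
      have hsplit : P (a ⊓ b) - ∑ α ∈ F', S α (θ α (a ⊓ b)) * star (S α (θ α (a ⊓ b)))
          = (P (a ⊓ b) - ∑ α ∈ hfin.toFinset, S α (θ α (a ⊓ b)) * star (S α (θ α (a ⊓ b))))
            + ∑ α ∈ hfin.toFinset \ F', S α (θ α (a ⊓ b)) * star (S α (θ α (a ⊓ b))) := by
        rw [← Finset.sum_sdiff hsub]; abel
      rw [hsplit]
      refine hadd _ hmem _ (hSum _ _ ?_)
      intro α hα
      have h1 : α ∉ F' := (Finset.mem_sdiff.mp hα).2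
      have h2 : θ α (a ⊓ b) ∈ H := by
        by_contra h
        exact h1 (Finset.mem_coe.mp (hF' ▸ (h : α ∈ DeltaQ θ H (a ⊓ b))))
      exact heIdl α _ (hRI α (a ⊓ b)) h2
  -- BH closed under sup
  have hBHsup : ∀ {a b : B}, a ∈ BH → b ∈ BH → a ⊔ b ∈ BH := by
    intro a b ha hb
    refine hBHmem.mpr ?_
    rintro c ⟨W, hW, hc⟩ hcH
    have hc1 : c \ b ≤ a ⊔ W := by
      rw [sdiff_le_iff]
      exact hc.trans (le_of_eq (by ac_rfl))
    have hc2 : c ⊓ b ≤ b ⊔ (⊥ : B) := le_trans inf_le_right le_sup_left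
    have hcc : (c ⊓ b) ⊔ (c \ b) = c := sup_inf_sdiff c b
    -- DeltaQ c ⊆ DeltaQ (c \ b) ∪ DeltaQ (c ⊓ b)
    have hDsub : DeltaQ θ H c ⊆ DeltaQ θ H (c \ b) ∪ DeltaQ θ H (c ⊓ b) := by
      intro α hα
      by_contra h
      rw [Set.mem_union] at h
      push_neg at h
      have h1 : θ α (c \ b) ∈ H := not_not.mp h.1
      have h2 : θ α (c ⊓ b) ∈ H := not_not.mp h.2
      refine hα ?_
      have : θ α c = θ α (c ⊓ b) ⊔ θ α (c \ b) := by rw [← (hθ α).2.1, hcc]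
      rw [this]
      exact hHsup h2 h1
    have hfin1 : (DeltaQ θ H (c \ b)).Finite := by
      by_cases h1 : c \ b ∈ H
      · have : DeltaQ θ H (c \ b) = ∅ :=
          Set.eq_empty_iff_forall_notMem.mpr fun α h => h (hHθ α _ h1)
        rw [this]; exact Set.finite_empty
      · exact ((hBHmem.mp ha) (c \ b) ⟨W, hW, hc1⟩ h1).2
    have hfin2 : (DeltaQ θ H (c ⊓ b)).Finite := by
      by_cases h2 : c ⊓ b ∈ H
      · have : DeltaQ θ H (c ⊓ b) = ∅ :=
          Set.eq_empty_iff_forall_notMem.mpr fun α h => h (hHθ α _ h2)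
        rw [this]; exact Set.finite_empty
      · exact ((hBHmem.mp hb) (c ⊓ b) ⟨⊥, hHbot, hc2⟩ h2).2
    refine ⟨?_, (hfin1.union hfin2).subset hDsub⟩
    -- nonemptiness
    by_cases h1 : c \ b ∈ H
    · have h2 : c ⊓ b ∉ H := by
        intro h2
        exact hcH (hHdown (hHsup h2 h1) (le_of_eq hcc.symm))
      obtain ⟨α, hα⟩ := ((hBHmem.mp hb) (c ⊓ b) ⟨⊥, hHbot, hc2⟩ h2).1
      exact ⟨α, fun h => hα (hHdown h (hθmono α inf_le_left))⟩
    · obtain ⟨α, hα⟩ := ((hBHmem.mp ha) (c \ b) ⟨W, hW, hc1⟩ h1).1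
      exact ⟨α, fun h => hα (hHdown h (hθmono α sdiff_le))⟩
  -- Goal 2 : SI closed under sup
  have goal2 : ∀ a ∈ SI, ∀ b ∈ SI, a ⊔ b ∈ SI := by
    intro a ha b hb
    obtain ⟨haBH, -⟩ := hSImem.mp ha
    obtain ⟨hbBH, hb2⟩ := hSImem.mp hb
    refine hSImem.mpr ⟨hBHsup haBH hbBH, ?_⟩
    have hu : a \ b ∈ SI := by
      have := goal4 a ha (a \ b)
      rwa [inf_eq_right.mpr sdiff_le] at this
    obtain ⟨-, hu2⟩ := hSImem.mp hu
    have hdisj : (a \ b) ⊓ b = ⊥ := inf_sdiff_self_left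
    have hsup : (a \ b) ⊔ b = a ⊔ b := sdiff_sup_self b a
    intro F hF
    rw [← hsup] at hF ⊢
    set u := a \ b with hu_def
    -- split F
    have hF1 : ↑(F.filter (fun α => θ α u ∉ H)) = DeltaQ θ H u := by
      ext α
      simp only [Finset.coe_filter, Set.mem_setOf_eq, Finset.mem_coe]
      constructor
      · exact fun h => h.2
      · intro h
        refine ⟨?_, h⟩
        have : α ∈ DeltaQ θ H (u ⊔ b) := fun hm => h (hHdown hm (hθmono α le_sup_left))
        rw [← hF] at this
        exact Finset.mem_coe.mp this
    have hF2 : ↑(F.filter (fun α => θ α b ∉ H)) = DeltaQ θ H b := by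
      ext α
      simp only [Finset.coe_filter, Set.mem_setOf_eq, Finset.mem_coe]
      constructor
      · exact fun h => h.2
      · intro h
        refine ⟨?_, h⟩
        have : α ∈ DeltaQ θ H (u ⊔ b) := fun hm => h (hHdown hm (hθmono α le_sup_right))
        rw [← hF] at this
        exact Finset.mem_coe.mp this
    have hDu := hu2 _ hF1
    have hDv := hb2 _ hF2
    -- pointwise decomposition of the summands
    have hEsum : ∀ α : L, S α (θ α (u ⊔ b)) * star (S α (θ α (u ⊔ b)))
        = S α (θ α u) * star (S α (θ α u)) + S α (θ α b) * star (S α (θ α b)) := by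
      intro α
      have hθd : θ α u ⊓ θ α b = ⊥ := by rw [← (hθ α).1, hdisj, (hθ α).2.2.2]
      have hθd' : θ α b ⊓ θ α u = ⊥ := by rw [inf_comm]; exact hθd
      rw [(hθ α).2.1, aux_Sadd hrep hI (hRI α u) (hRI α b) hθd, star_add, add_mul, mul_add,
        mul_add, aux_Szero hrep hI (hRI α u) (hRI α b) hθd,
        aux_Szero hrep hI (hRI α b) (hRI α u) hθd']
      abel
    have hPsum : P (u ⊔ b) = P u + P b := by
      rw [hrep.2.2.2.1, hdisj, hrep.2.1, sub_zero]
    have e1 : P (u ⊔ b) - ∑ α ∈ F, S α (θ α (u ⊔ b)) * star (S α (θ α (u ⊔ b)))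
        = (P u - ∑ α ∈ F, S α (θ α u) * star (S α (θ α u)))
          + (P b - ∑ α ∈ F, S α (θ α b) * star (S α (θ α b))) := by
      rw [hPsum, Finset.sum_congr rfl (fun α _ => hEsum α), Finset.sum_add_distrib]
      abel
    rw [e1]
    have hpart : ∀ (w : B) (Fw : Finset L), Fw ⊆ F → (↑Fw : Set L) = DeltaQ θ H w →
        P w - ∑ α ∈ Fw, S α (θ α w) * star (S α (θ α w)) ∈ Idl →
        P w - ∑ α ∈ F, S α (θ α w) * star (S α (θ α w)) ∈ Idl := by
      intro w Fw hsub hFw hD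
      have hsplit : P w - ∑ α ∈ F, S α (θ α w) * star (S α (θ α w))
          = (P w - ∑ α ∈ Fw, S α (θ α w) * star (S α (θ α w)))
            - ∑ α ∈ F \ Fw, S α (θ α w) * star (S α (θ α w)) := by
        rw [← Finset.sum_sdiff hsub]; abel
      rw [hsplit]
      refine hSub _ hD _ (hSum _ _ ?_)
      intro α hα
      have h1 : α ∉ Fw := (Finset.mem_sdiff.mp hα).2
      have h2 : θ α w ∈ H := by
        by_contra h
        exact h1 (Finset.mem_coe.mp (hFw ▸ (h : α ∈ DeltaQ θ H w)))
      exact heIdl α _ (hRI α w) h2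
    exact hadd _ (hpart u _ (Finset.filter_subset _ _) hF1 hDu)
      _ (hpart b _ (Finset.filter_subset _ _) hF2 hDv)
  -- H ⊆ SI
  have goal5 : H ⊆ SI := by
    intro A hA
    refine hSImem.mpr ⟨hBHmem.mpr ?_, ?_⟩
    · rintro c ⟨W, hW, hc⟩ hcH
      exact absurd (hHdown (hHsup hA hW) hc) hcH
    · intro F hF
      have hDQ : DeltaQ θ H A = ∅ :=
        Set.eq_empty_iff_forall_notMem.mpr fun α h => h (hHθ α _ hA)
      have hFe : F = ∅ := Finset.coe_eq_empty.mp (by rw [hF, hDQ])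
      rw [hFe, Finset.sum_empty, sub_zero]
      exact hHmem.mp hA
  -- J ⊆ SI
  have goal6 : J ⊆ SI := by
    intro A hA
    -- key claim: any nonzero (mod H) subelement of A has some α with θ α d ∉ H
    have hkey : ∀ d : B, d ≤ A → d ∉ H → ∃ α, θ α d ∉ H := by
      intro d hdA hdH
      by_contra h
      push_neg at h
      refine hdH (hHmem.mpr ?_)
      have hAne : A ≠ ⊥ := by
        rintro rfl
        exact hdH (hHdown hHbot (le_bot_iff.mp hdA).le)
      obtain ⟨-, hfin⟩ := hJreg hA A le_rfl hAne
      have hPA := hrep.2.2.2.2.2.2 A hA hfin.toFinset (Set.Finite.coe_toFinset hfin)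
      have h2 : P d = ∑ α ∈ hfin.toFinset, S α (θ α d) * star (S α (θ α d)) := by
        calc P d = P (A ⊓ d) := by rw [inf_eq_right.mpr hdA]
          _ = P d * P A * P d := (aux_PPP hrep A d).symm
          _ = P d * (∑ α ∈ hfin.toFinset, S α (θ α A) * star (S α (θ α A))) * P d := by
              rw [← hPA]
          _ = ∑ α ∈ hfin.toFinset, P d * (S α (θ α A) * star (S α (θ α A))) * P d := by
              rw [Finset.mul_sum, Finset.sum_mul]
          _ = ∑ α ∈ hfin.toFinset, S α (θ α (A ⊓ d)) * star (S α (θ α (A ⊓ d))) :=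
              Finset.sum_congr rfl fun α _ => aux_PeP hrep hI hθ hRI A d α
          _ = ∑ α ∈ hfin.toFinset, S α (θ α d) * star (S α (θ α d)) := by
              rw [inf_eq_right.mpr hdA]
      rw [h2]
      exact hSum _ _ fun α _ => heIdl α _ (hRI α d) (h α)
    refine hSImem.mpr ⟨hBHmem.mpr ?_, ?_⟩
    · rintro c ⟨W, hW, hc⟩ hcH
      have hd : c \ W ≤ A := sdiff_le_iff.mpr (hc.trans (le_of_eq (sup_comm A W)))
      have hdH : c \ W ∉ H := fun h => hcH (hHdown (hHsup h hW) le_sdiff_sup)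
      constructor
      · obtain ⟨α, hα⟩ := hkey (c \ W) hd hdH
        exact ⟨α, fun hm => hα (hHdown hm (hθmono α sdiff_le))⟩
      · have hdne : c \ W ≠ ⊥ := fun h => hdH (h ▸ hHbot)
        obtain ⟨-, hfin⟩ := hJreg hA (c \ W) hd hdne
        refine hfin.subset ?_
        intro α hα
        by_contra hbot
        simp only [Delta, Set.mem_setOf_eq, not_not] at hbot
        refine hα ?_
        have h1 : θ α (c \ W) ∈ H := hbot ▸ hHbot
        have h2 : θ α (c ⊓ W) ∈ H := hHθ α _ (hHdown hW inf_le_right)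
        have h3 : c = (c ⊓ W) ⊔ (c \ W) := (sup_inf_sdiff c W).symm
        show θ α c ∈ H
        rw [h3, (hθ α).2.1]
        exact hHsup h2 h1
    · intro F hF
      by_cases hAne : A = ⊥
      · have hFe : F = ∅ := by
          refine Finset.eq_empty_of_forall_notMem fun α hα => ?_
          have h1 : α ∈ DeltaQ θ H A := hF ▸ Finset.mem_coe.mpr hα
          exact h1 (by rw [hAne, (hθ α).2.2.2]; exact hHbot)
        rw [hFe, Finset.sum_empty, sub_zero, hAne, hrep.2.1]
        exact h0
      · obtain ⟨-, hfin⟩ := hJreg hA A le_rfl hAne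
        have hPA := hrep.2.2.2.2.2.2 A hA hfin.toFinset (Set.Finite.coe_toFinset hfin)
        have hsub : F ⊆ hfin.toFinset := by
          intro α hα
          have h1 : α ∈ DeltaQ θ H A := hF ▸ Finset.mem_coe.mpr hα
          rw [Set.Finite.mem_toFinset]
          exact fun hb => h1 (hb ▸ hHbot)
        have hsplit : P A - ∑ α ∈ F, S α (θ α A) * star (S α (θ α A))
            = ∑ α ∈ hfin.toFinset \ F, S α (θ α A) * star (S α (θ α A)) := by
          rw [hPA, ← Finset.sum_sdiff hsub]; abel
        rw [hsplit]
        refine hSum _ _ fun α hα => ?_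
        have h1 : α ∉ F := (Finset.mem_sdiff.mp hα).2
        have h2 : θ α A ∈ H := by
          by_contra h
          exact h1 (Finset.mem_coe.mp (hF ▸ (h : α ∈ DeltaQ θ H A)))
        exact heIdl α _ (hRI α A) h2
  exact ⟨fun a ha => (hSImem.mp ha).1, goal2,
    fun a ha b _ => goal4 a ha b, goal4, goal5, goal6⟩
end
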